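/- arXiv:1602.07028 — 2 statements merged into one kernel-verified Lean document; each statement's English description precedes it below -/
import Mathlib

section
/- As a graded algebra, R_n(A_n) = ⊕_{γ ∈ Q̃⁺_n} R_n(A_n)_γ, a direct sum of two-sided Z-graded ideals, where R_n(A_n)_γ is the fixed-point subalgebra of R_γ = ⊕_{α∈γ} R_α under sgn. -/
open scoped BigOperators

namespace QH


/-! ### Generalities -/

/-- The fixed-point subalgebra of an algebra endomorphism. -/
def fixedSubalgebra (R : Type*) {A : Type*} [CommSemiring R] [Semiring A] [Algebra R A]
    (f : A →ₐ[R] A) : Subalgebra R A where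
  carrier := {a | f a = a}
  mul_mem' := fun {a b} ha hb => by
    simp only [Set.mem_setOf_eq] at *
    rw [map_mul, ha, hb]
  add_mem' := fun {a b} ha hb => by
    simp only [Set.mem_setOf_eq] at *
    rw [map_add, ha, hb]
  algebraMap_mem' := fun r => by simp

/-! ### Quantum integers -/

/-- The quantum integer `[k]_t`. -/
def qint {K : Type*} [Field K] (t : K) (k : ℤ) : K :=
  if 0 ≤ k then ∑ j ∈ Finset.range k.toNat, t ^ (j : ℤ)
  else -∑ j ∈ Finset.range (-k).toNat, t ^ (-(j : ℤ) - 1)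

/-- The Poincaré polynomial `P_H(t) = [1][2]⋯[n]`. -/
def poincare {K : Type*} [Field K] (t : K) (n : ℕ) : K :=
  ∏ k ∈ Finset.Icc 1 n, qint t (k : ℤ)

/-- `ξ` has quantum characteristic `e` (finite). -/
def IsQuantumChar {F : Type*} [Field F] (ξ : F) (e : ℕ) : Prop :=
  ξ ≠ 0 ∧ 0 < e ∧ (∑ k ∈ Finset.range e, ξ ^ k = 0) ∧
    ∀ m, 0 < m → m < e → (∑ k ∈ Finset.range m, ξ ^ k) ≠ 0

/-- `F` is large enough for `ξ` of quantum characteristic `e`. -/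
def LargeEnough {F : Type*} [Field F] (ξ : F) (e : ℕ) : Prop :=
  3 < e → (∃ a : F, a ^ 2 = ξ) ∧ ∃ b : F, b ^ 2 = 1 + ξ + ξ ^ 2

/-! ### The Iwahori–Hecke algebra of the symmetric group -/

/-- Defining relations of the Iwahori–Hecke algebra on `m` generators. -/
inductive HeckeRel (Z : Type*) [CommRing Z] (ξ : Z) (m : ℕ) :
    FreeAlgebra Z (Fin m) → FreeAlgebra Z (Fin m) → Prop
  | quad (r : Fin m) :
      HeckeRel Z ξ m ((FreeAlgebra.ι Z r - algebraMap Z _ ξ) * (FreeAlgebra.ι Z r + 1)) 0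
  | comm (r s : Fin m) (h : (r : ℕ) + 1 < s) :
      HeckeRel Z ξ m (FreeAlgebra.ι Z r * FreeAlgebra.ι Z s)
        (FreeAlgebra.ι Z s * FreeAlgebra.ι Z r)
  | braid (r s : Fin m) (h : (s : ℕ) = r + 1) :
      HeckeRel Z ξ m (FreeAlgebra.ι Z r * FreeAlgebra.ι Z s * FreeAlgebra.ι Z r)
        (FreeAlgebra.ι Z s * FreeAlgebra.ι Z r * FreeAlgebra.ι Z s)

/-- The Iwahori–Hecke algebra `H_ξ(S_n)`, with generators `T_1, …, T_{n-1}`. -/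
abbrev Hecke (Z : Type*) [CommRing Z] (ξ : Z) (n : ℕ) := RingQuot (HeckeRel Z ξ (n - 1))

/-- The generator `T_r` of the Iwahori–Hecke algebra (`r` is 0-indexed). -/
noncomputable def Tgen (Z : Type*) [CommRing Z] (ξ : Z) (n : ℕ) (r : Fin (n - 1)) :
    Hecke Z ξ n :=
  RingQuot.mkAlgHom Z (HeckeRel Z ξ (n - 1)) (FreeAlgebra.ι Z r)

/-- `φ` is the hash involution `#`: the automorphism with `T_r^# = -T_r + (ξ-1)`. -/
def HashSpec (Z : Type*) [CommRing Z] (ξ : Z) (n : ℕ)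
    (φ : Hecke Z ξ n ≃ₐ[Z] Hecke Z ξ n) : Prop :=
  ∀ r, φ (Tgen Z ξ n r) = - Tgen Z ξ n r + algebraMap Z _ (ξ - 1)

/-- The word `s_a s_{a+1} ⋯ s_{b-1} s_{b-2} ⋯ s_a` for the transposition `(a, b)`,
in terms of 1-indexed Coxeter generators. -/
def transWord (a b : ℕ) : List ℕ :=
  (List.range' a (b - a)) ++ (List.range' a (b - 1 - a)).reverse

/-- The product `T_w` of Hecke generators along a word (1-indexed entries). -/
noncomputable def Tword (Z : Type*) [CommRing Z] (ξ : Z) (n : ℕ) (w : List ℕ) :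
    Hecke Z ξ n :=
  (w.map (fun m => if h : m - 1 < n - 1 then Tgen Z ξ n ⟨m - 1, h⟩ else 1)).prod

/-- The Jucys–Murphy element `L_k = ∑_{j=1}^{k-1} t^{j-k} T_{(k-j,k)}`. -/
noncomputable def JM (K : Type*) [Field K] (t : K) (n : ℕ) (k : ℕ) : Hecke K t n :=
  ∑ j ∈ Finset.Icc 1 (k - 1), (t ^ ((j : ℤ) - (k : ℤ))) • Tword K t n (transWord (k - j) k)



/-! ### Standard tableaux -/

/-- A standard tableau of shape `μ`: a filling of the cells of `μ` by `1, …, |μ|`,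
increasing along rows and down columns (and `0` off the diagram). -/
structure StdTableau (μ : YoungDiagram) where
  entry : ℕ × ℕ → ℕ
  zero_off : ∀ c, c ∉ μ → entry c = 0
  mem_entry : ∀ c ∈ μ, entry c ∈ Finset.Icc 1 μ.card
  injOn : Set.InjOn entry ↑μ.cells
  surjOn : ∀ m ∈ Finset.Icc 1 μ.card, ∃ c ∈ μ, entry c = m
  row_lt : ∀ r c₁ c₂, (r, c₁) ∈ μ → (r, c₂) ∈ μ → c₁ < c₂ → entry (r, c₁) < entry (r, c₂)
  col_lt : ∀ r₁ r₂ c, (r₁, c) ∈ μ → (r₂, c) ∈ μ → r₁ < r₂ → entry (r₁, c) < entry (r₂, c)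

namespace StdTableau

variable {μ : YoungDiagram}

/-- The cell of a standard tableau containing the entry `m`. -/
noncomputable def cellOf (T : StdTableau μ) (m : ℕ) : ℕ × ℕ :=
  Function.invFunOn T.entry ↑μ.cells m

/-- The content `c_m(T) = col - row` of the entry `m` of `T`. -/
noncomputable def contentAt (T : StdTableau μ) (m : ℕ) : ℤ :=
  ((T.cellOf m).2 : ℤ) - ((T.cellOf m).1 : ℤ)

/-- The `e`-residue of the entry `m` of `T`. -/
noncomputable def resAt (e : ℕ) (T : StdTableau μ) (m : ℕ) : ZMod e :=
  ((T.cellOf m).2 : ZMod e) - ((T.cellOf m).1 : ZMod e)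

/-- The `e`-residue sequence of `T`, as a function `Fin n → ZMod e`
(meaningful when `μ.card = n`). -/
noncomputable def resSeq (e n : ℕ) (T : StdTableau μ) : Fin n → ZMod e :=
  fun k => T.resAt e (k.1 + 1)

/-- The axial distance `ρ_r(T) = c_r(T) - c_{r+1}(T)`. -/
noncomputable def axial (T : StdTableau μ) (r : ℕ) : ℤ :=
  T.contentAt r - T.contentAt (r + 1)

end StdTableau

theorem card_transpose (μ : YoungDiagram) : μ.transpose.card = μ.card := by
  classical
  refine Finset.card_bij (fun c _ => Prod.swap c) ?_ ?_ ?_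
  · intro a ha
    rw [YoungDiagram.mem_cells] at ha ⊢
    exact YoungDiagram.mem_transpose.mp ha
  · intro a _ b _ h
    exact Prod.swap_injective h
  · intro b hb
    refine ⟨b.swap, ?_, by simp⟩
    rw [YoungDiagram.mem_cells] at hb ⊢
    rw [YoungDiagram.mem_transpose]
    simpa using hb

/-- The conjugate (transposed) standard tableau. -/
def StdTableau.conj {μ : YoungDiagram} (T : StdTableau μ) : StdTableau μ.transpose where
  entry c := T.entry c.swap
  zero_off c hc := T.zero_off _ (fun h => hc (YoungDiagram.mem_transpose.mpr h))
  mem_entry c hc := by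
    rw [card_transpose]
    exact T.mem_entry _ (YoungDiagram.mem_transpose.mp hc)
  injOn := by
    intro a ha b hb h
    have ha' : a.swap ∈ (↑μ.cells : Set (ℕ × ℕ)) := by
      simp only [Finset.mem_coe, YoungDiagram.mem_cells] at ha ⊢
      exact YoungDiagram.mem_transpose.mp ha
    have hb' : b.swap ∈ (↑μ.cells : Set (ℕ × ℕ)) := by
      simp only [Finset.mem_coe, YoungDiagram.mem_cells] at hb ⊢
      exact YoungDiagram.mem_transpose.mp hb
    exact Prod.swap_injective (T.injOn ha' hb' h)
  surjOn m hm := by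
    rw [card_transpose] at hm
    obtain ⟨c, hc, hco⟩ := T.surjOn m hm
    exact ⟨c.swap, YoungDiagram.mem_transpose.mpr (by simpa using hc), by simpa using hco⟩
  row_lt r c₁ c₂ h1 h2 hlt :=
    T.col_lt c₁ c₂ r (YoungDiagram.mem_transpose.mp h1) (YoungDiagram.mem_transpose.mp h2) hlt
  col_lt r₁ r₂ c h1 h2 hlt :=
    T.row_lt c r₁ r₂ (YoungDiagram.mem_transpose.mp h1) (YoungDiagram.mem_transpose.mp h2) hlt



/-- A standard tableau with `n` boxes (bundled with its shape). -/
def StdTab (n : ℕ) := {p : Σ μ : YoungDiagram, StdTableau μ // p.1.card = n}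

/-- A pair of standard tableaux of the same shape with `n` boxes. -/
def StdPair (n : ℕ) := {p : Σ μ : YoungDiagram, StdTableau μ × StdTableau μ // p.1.card = n}

namespace StdTab

variable {n : ℕ}

def shape (s : StdTab n) : YoungDiagram := s.1.1
def tab (s : StdTab n) : StdTableau s.shape := s.1.2

end StdTab

namespace StdPair

variable {n : ℕ}

def left (p : StdPair n) : StdTab n := ⟨⟨p.1.1, p.1.2.1⟩, p.2⟩
def right (p : StdPair n) : StdTab n := ⟨⟨p.1.1, p.1.2.2⟩, p.2⟩

end StdPair

/-- Transport of standard tableaux along an equality of shapes. -/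
def castTab {μ ν : YoungDiagram} (h : μ = ν) (T : StdTableau μ) : StdTableau ν := h ▸ T

/-- The diagonal pair `(s, s)`. -/
def StdTab.diag {n : ℕ} (s : StdTab n) : StdPair n := ⟨⟨s.1.1, s.1.2, s.1.2⟩, s.2⟩

/-- The pair built from two tableaux of the same shape. -/
def mkPair {n : ℕ} (a b : StdTab n) (h : a.1.1 = b.1.1) : StdPair n :=
  ⟨⟨a.1.1, a.1.2, castTab h.symm b.1.2⟩, a.2⟩

/-- Composite pair `(p.left, q.right)` when `p.right = q.left`. -/
def StdPair.comp {n : ℕ} (p q : StdPair n) (h : p.right = q.left) : StdPair n := by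
  refine ⟨⟨p.1.1, p.1.2.1, castTab ?_ q.1.2.2⟩, p.2⟩
  exact (congrArg (fun s : StdTab n => s.1.1) h).symm

/-- Swap the two members of a pair. -/
def StdPair.swap {n : ℕ} (p : StdPair n) : StdPair n := ⟨⟨p.1.1, p.1.2.2, p.1.2.1⟩, p.2⟩

/-! ### Degrees of standard tableaux (Brundan–Kleshchev–Wang) -/

namespace StdTableau

variable {μ : YoungDiagram}

/-- Length of row `r` of the subdiagram of cells of `T` with entry `≤ m`. -/
noncomputable def rowLenLe (T : StdTableau μ) (m r : ℕ) : ℕ := by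
  classical
  exact (μ.cells.filter (fun c => c.1 = r ∧ T.entry c ≤ m)).card

/-- Row `r` carries an addable node of the shape `T_{≤ m}`. -/
def IsAddable (T : StdTableau μ) (m r : ℕ) : Prop :=
  r = 0 ∨ T.rowLenLe m r < T.rowLenLe m (r - 1)

/-- The residue of the addable node of `T_{≤m}` in row `r`. -/
noncomputable def addableRes (e : ℕ) (T : StdTableau μ) (m r : ℕ) : ZMod e :=
  (T.rowLenLe m r : ZMod e) - (r : ZMod e)

/-- Row `r` carries a removable node of the shape `T_{≤ m}`. -/
def IsRemovable (T : StdTableau μ) (m r : ℕ) : Prop :=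
  T.rowLenLe m (r + 1) < T.rowLenLe m r

/-- The residue of the removable node of `T_{≤m}` in row `r`. -/
noncomputable def removableRes (e : ℕ) (T : StdTableau μ) (m r : ℕ) : ZMod e :=
  (T.rowLenLe m r : ZMod e) - 1 - (r : ZMod e)

noncomputable def resAt' (e : ℕ) (T : StdTableau μ) (m : ℕ) : ZMod e :=
  ((T.cellOf m).2 : ZMod e) - ((T.cellOf m).1 : ZMod e)

/-- The contribution `d_A(λ)` of the entry `m` to the degree of `T`:
the number of addable nodes of residue `res_m(T)` strictly below the cell of `m`
in the shape `T_{≤m}`, minus the number of removable ones. -/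
noncomputable def degTerm (e : ℕ) (T : StdTableau μ) (m : ℕ) : ℤ := by
  classical
  exact
    (((Finset.range (μ.card + 1)).filter (fun r =>
        (T.cellOf m).1 < r ∧ T.IsAddable m r ∧ T.addableRes e m r = T.resAt' e m)).card : ℤ) -
    (((Finset.range (μ.card + 1)).filter (fun r =>
        (T.cellOf m).1 < r ∧ T.IsRemovable m r ∧ T.removableRes e m r = T.resAt' e m)).card : ℤ)

/-- The Brundan–Kleshchev–Wang degree of a standard tableau. -/
noncomputable def deg (e : ℕ) (T : StdTableau μ) : ℤ :=
  ∑ m ∈ Finset.Icc 1 μ.card, T.degTerm e m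

end StdTableau

noncomputable def StdTab.deg {n : ℕ} (e : ℕ) (s : StdTab n) : ℤ := s.1.2.deg e

noncomputable def StdTab.resSeqT {n : ℕ} (e : ℕ) (s : StdTab n) : Fin n → ZMod e :=
  fun k => ((s.1.2.cellOf (k.1 + 1)).2 : ZMod e) - ((s.1.2.cellOf (k.1 + 1)).1 : ZMod e)

/-- The set `I^n_+` of residue sequences starting `0, +1`. -/
def IPlus (e n : ℕ) : Set (Fin n → ZMod e) :=
  {i | ∃ (h0 : 0 < n) (h1 : 1 < n), i ⟨0, h0⟩ = 0 ∧ i ⟨1, h1⟩ = 1}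

/-- `u` is obtained from `s` by swapping the entries `r` and `r + 1`. -/
def IsEntrySwap {n : ℕ} (u s : StdTab n) (r : ℕ) : Prop :=
  u.1.1 = s.1.1 ∧ ∀ c, u.1.2.entry c =
    (if s.1.2.entry c = r then r + 1 else if s.1.2.entry c = r + 1 then r else s.1.2.entry c)

/-- Dominance order on Young diagrams. -/
def Dominates (μ ν : YoungDiagram) : Prop :=
  ∀ k, ∑ r ∈ Finset.range k, ν.rowLen r ≤ ∑ r ∈ Finset.range k, μ.rowLen r



/-! ### Quiver Hecke (KLR) algebras of type A, level 1 (`Λ = Λ_0`) -/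

/-- Residue sequences: `I^n` with `I = ℤ/eℤ`. -/
abbrev nseq (e n : ℕ) := Fin n → ZMod e

/-- The action of the simple transposition `s_r` on residue sequences (0-indexed). -/
def swapSeq {e n : ℕ} (r : ℕ) (h : r + 1 < n) (i : nseq e n) : nseq e n :=
  i ∘ Equiv.swap ⟨r, Nat.lt_of_succ_lt h⟩ ⟨r + 1, h⟩

/-- The Cartan matrix of the quiver `Γ_e`. -/
def cartan (e : ℕ) (i j : ZMod e) : ℤ :=
  if i = j then 2 else if j = i + 1 ∨ i = j + 1 then -1 else 0

/-- Generators of the quiver Hecke algebra: `ψ_r`, `y_s` and the idempotents `e(i)`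
for `i` in a prescribed set `S` of residue sequences (all indices 0-indexed). -/
inductive KLRGen (e n : ℕ) (S : Finset (nseq e n)) : Type
  | psi (r : ℕ) (h : r + 1 < n)
  | y (s : ℕ) (h : s < n)
  | idem (i : nseq e n) (hi : i ∈ S)

variable (Z : Type*) [CommRing Z] (e n : ℕ) (S : Finset (nseq e n))

/-- `ψ_r` in the free algebra. -/
def fψ (r : ℕ) (h : r + 1 < n) : FreeAlgebra Z (KLRGen e n S) :=
  FreeAlgebra.ι Z (KLRGen.psi r h)

/-- `y_s` in the free algebra. -/
def fy (s : ℕ) (h : s < n) : FreeAlgebra Z (KLRGen e n S) :=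
  FreeAlgebra.ι Z (KLRGen.y s h)

/-- `e(i)` in the free algebra. -/
def fe (i : nseq e n) (hi : i ∈ S) : FreeAlgebra Z (KLRGen e n S) :=
  FreeAlgebra.ι Z (KLRGen.idem i hi)

/-- The defining relations of the cyclotomic quiver Hecke algebra `R(Γ_e, Λ_0)`
(Brundan–Kleshchev relations), with idempotents indexed by `S`. -/
inductive KLRRel : FreeAlgebra Z (KLRGen e n S) → FreeAlgebra Z (KLRGen e n S) → Prop
  | cyc (i : nseq e n) (hi : i ∈ S) (h0 : 0 < n) :
      KLRRel ((fy Z e n S 0 h0) ^ (if i ⟨0, h0⟩ = 0 then 1 else 0) * fe Z e n S i hi) 0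
  | idem_mul (i j : nseq e n) (hi : i ∈ S) (hj : j ∈ S) :
      KLRRel (fe Z e n S i hi * fe Z e n S j hj) (if i = j then fe Z e n S i hi else 0)
  | idem_sum : KLRRel (∑ i ∈ S.attach, fe Z e n S i.1 i.2) 1
  | y_idem (s : ℕ) (hs : s < n) (i : nseq e n) (hi : i ∈ S) :
      KLRRel (fy Z e n S s hs * fe Z e n S i hi) (fe Z e n S i hi * fy Z e n S s hs)
  | psi_idem (r : ℕ) (h : r + 1 < n) (i : nseq e n) (hi : i ∈ S) (hsi : swapSeq r h i ∈ S) :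
      KLRRel (fψ Z e n S r h * fe Z e n S i hi)
        (fe Z e n S (swapSeq r h i) hsi * fψ Z e n S r h)
  | yy (s : ℕ) (hs : s < n) (u : ℕ) (hu : u < n) :
      KLRRel (fy Z e n S s hs * fy Z e n S u hu) (fy Z e n S u hu * fy Z e n S s hs)
  | psi_y_succ (r : ℕ) (h : r + 1 < n) (i : nseq e n) (hi : i ∈ S) :
      KLRRel (fψ Z e n S r h * fy Z e n S (r + 1) h * fe Z e n S i hi)
        ((fy Z e n S r (Nat.lt_of_succ_lt h) * fψ Z e n S r h +
          if i ⟨r, Nat.lt_of_succ_lt h⟩ = i ⟨r + 1, h⟩ then 1 else 0) * fe Z e n S i hi)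
  | y_succ_psi (r : ℕ) (h : r + 1 < n) (i : nseq e n) (hi : i ∈ S) :
      KLRRel (fy Z e n S (r + 1) h * fψ Z e n S r h * fe Z e n S i hi)
        ((fψ Z e n S r h * fy Z e n S r (Nat.lt_of_succ_lt h) +
          if i ⟨r, Nat.lt_of_succ_lt h⟩ = i ⟨r + 1, h⟩ then 1 else 0) * fe Z e n S i hi)
  | psi_y_far (r : ℕ) (h : r + 1 < n) (s : ℕ) (hs : s < n) (hfar : s ≠ r ∧ s ≠ r + 1) :
      KLRRel (fψ Z e n S r h * fy Z e n S s hs) (fy Z e n S s hs * fψ Z e n S r h)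
  | psi_psi_far (r : ℕ) (h : r + 1 < n) (s : ℕ) (hs : s + 1 < n)
      (hfar : r + 1 < s ∨ s + 1 < r) :
      KLRRel (fψ Z e n S r h * fψ Z e n S s hs) (fψ Z e n S s hs * fψ Z e n S r h)
  | quad (r : ℕ) (h : r + 1 < n) (i : nseq e n) (hi : i ∈ S) :
      KLRRel (fψ Z e n S r h ^ 2 * fe Z e n S i hi)
        (if i ⟨r, Nat.lt_of_succ_lt h⟩ = i ⟨r + 1, h⟩ then 0
         else if i ⟨r + 1, h⟩ = i ⟨r, Nat.lt_of_succ_lt h⟩ + 1 then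
          (fy Z e n S r (Nat.lt_of_succ_lt h) - fy Z e n S (r + 1) h) * fe Z e n S i hi
         else if i ⟨r, Nat.lt_of_succ_lt h⟩ = i ⟨r + 1, h⟩ + 1 then
          (fy Z e n S (r + 1) h - fy Z e n S r (Nat.lt_of_succ_lt h)) * fe Z e n S i hi
         else fe Z e n S i hi)
  | braid (r : ℕ) (h2 : r + 2 < n) (i : nseq e n) (hi : i ∈ S) :
      KLRRel
        (fψ Z e n S r (Nat.lt_of_succ_lt h2) * fψ Z e n S (r + 1) h2 *
            fψ Z e n S r (Nat.lt_of_succ_lt h2) * fe Z e n S i hi)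
        (fψ Z e n S (r + 1) h2 * fψ Z e n S r (Nat.lt_of_succ_lt h2) *
            fψ Z e n S (r + 1) h2 * fe Z e n S i hi +
          (if i ⟨r, by omega⟩ = i ⟨r + 2, h2⟩ ∧ i ⟨r + 1, by omega⟩ = i ⟨r, by omega⟩ + 1
            then -1
           else if i ⟨r, by omega⟩ = i ⟨r + 2, h2⟩ ∧ i ⟨r, by omega⟩ = i ⟨r + 1, by omega⟩ + 1
            then 1
           else 0) * fe Z e n S i hi)

/-- The cyclotomic quiver Hecke algebra with idempotents indexed by `S`.
Taking `S = Finset.univ` gives `R_n(S_n) = ⊕_{α ∈ Q⁺_n} R_α`; taking `S = I^α`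
gives the block `R_α`. -/
abbrev KLR := RingQuot (KLRRel Z e n S)

/-- The generator `ψ_r` of the quiver Hecke algebra. -/
noncomputable def Ψgen (r : ℕ) (h : r + 1 < n) : KLR Z e n S :=
  RingQuot.mkAlgHom Z (KLRRel Z e n S) (fψ Z e n S r h)

/-- The generator `y_s` of the quiver Hecke algebra. -/
noncomputable def Ygen (s : ℕ) (hs : s < n) : KLR Z e n S :=
  RingQuot.mkAlgHom Z (KLRRel Z e n S) (fy Z e n S s hs)

/-- The idempotent generator `e(i)` of the quiver Hecke algebra. -/
noncomputable def Egen (i : nseq e n) (hi : i ∈ S) : KLR Z e n S :=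
  RingQuot.mkAlgHom Z (KLRRel Z e n S) (fe Z e n S i hi)

/-- `σ` is the sign automorphism `sgn` of a quiver Hecke algebra:
`ψ_r ↦ -ψ_r`, `y_s ↦ -y_s`, `e(i) ↦ e(-i)`. -/
def SgnSpec (σ : KLR Z e n S ≃ₐ[Z] KLR Z e n S) : Prop :=
  (∀ (r : ℕ) (h : r + 1 < n), σ (Ψgen Z e n S r h) = - Ψgen Z e n S r h) ∧
  (∀ (s : ℕ) (hs : s < n), σ (Ygen Z e n S s hs) = - Ygen Z e n S s hs) ∧
  (∀ (i : nseq e n) (hi : i ∈ S) (hni : -i ∈ S),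
    σ (Egen Z e n S i hi) = Egen Z e n S (-i) hni)

/-- A family of submodules is *the* `ℤ`-grading of the quiver Hecke algebra if it is an
algebra grading for which the KLR generators are homogeneous of the degrees
`deg e(i) = 0`, `deg y_s = 2`, `deg ψ_r e(i) = -c_{i_r, i_{r+1}}`. -/
def KLRGradingSpec (𝒜 : ℤ → Submodule Z (KLR Z e n S)) : Prop :=
  (∀ (i : nseq e n) (hi : i ∈ S), Egen Z e n S i hi ∈ 𝒜 0) ∧
  (∀ (s : ℕ) (hs : s < n), Ygen Z e n S s hs ∈ 𝒜 2) ∧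
  (∀ (r : ℕ) (h : r + 1 < n) (i : nseq e n) (hi : i ∈ S),
    Ψgen Z e n S r h * Egen Z e n S i hi ∈
      𝒜 (- cartan e (i ⟨r, Nat.lt_of_succ_lt h⟩) (i ⟨r + 1, h⟩)))

/-! ### Blocks -/

/-- The multiset of residues of a sequence (i.e. the positive root `α` with `i ∈ I^α`). -/
def mult {e n : ℕ} (i : nseq e n) : Multiset (ZMod e) := Finset.univ.val.map i

/-- The equivalence `i ∼ j` on `I^n` induced by `α ∼ α'`: same multiset of residues
up to simultaneous negation. -/
def gammaRel (e n : ℕ) (i j : nseq e n) : Prop :=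
  mult i = mult j ∨ mult i = (mult j).map (fun x => -x)

theorem gammaRel_equiv (e n : ℕ) : Equivalence (gammaRel e n) := by
  constructor
  · intro i; exact Or.inl rfl
  · intro i j h
    rcases h with h | h
    · exact Or.inl h.symm
    · right
      rw [h, Multiset.map_map]
      simp [Function.comp]
  · intro i j k hij hjk
    rcases hij with h | h <;> rcases hjk with h' | h'
    · exact Or.inl (h.trans h')
    · exact Or.inr (by rw [h, h'])
    · exact Or.inr (by rw [h, h'])
    · left
      rw [h, h', Multiset.map_map]
      simp [Function.comp]

/-- The setoid on `I^n` whose classes correspond to `Q̃⁺_n = Q⁺_n/∼`. -/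
def gammaSetoid (e n : ℕ) : Setoid (nseq e n) := ⟨gammaRel e n, gammaRel_equiv e n⟩

/-- `Q̃⁺_n`, realised as classes of residue sequences. -/
def Qtilde (e n : ℕ) : Type := Quotient (gammaSetoid e n)

/-- The class of a residue sequence in `Q̃⁺_n`. -/
def gammaOf {e n : ℕ} (i : nseq e n) : Qtilde e n := Quotient.mk (gammaSetoid e n) i

/-- `I^γ`, as a finset of residue sequences. -/
noncomputable def Iγ (e n : ℕ) [NeZero e] (γ : Qtilde e n) : Finset (nseq e n) := by
  classical
  exact Finset.univ.filter (fun i => gammaOf i = γ)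

/-- `I^α`, the finset of sequences of residue content `α`. -/
noncomputable def Iα (e n : ℕ) [NeZero e] (α : Multiset (ZMod e)) : Finset (nseq e n) := by
  classical
  exact Finset.univ.filter (fun i => mult i = α)


/-! ### Seminormal forms -/

namespace StdTab

/-- The content `c_m(s)` of the entry `m`. -/
noncomputable def contentT {n : ℕ} (s : StdTab n) (m : ℕ) : ℤ := s.1.2.contentAt m

/-- The conjugate (transposed) tableau. -/
noncomputable def conjT {n : ℕ} (s : StdTab n) : StdTab n :=
  ⟨⟨s.1.1.transpose, s.1.2.conj⟩, by rw [card_transpose]; exact s.2⟩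

/-- The axial distance `ρ_r(s) = c_r(s) - c_{r+1}(s)`. -/
noncomputable def axialT {n : ℕ} (s : StdTab n) (r : ℕ) : ℤ :=
  s.contentT r - s.contentT (r + 1)

end StdTab

/-- A `*`-seminormal coefficient system (Hu–Mathas). -/
def IsSNCoeffSystem (K : Type*) [Field K] (t : K) (n : ℕ) (α : ℕ → StdTab n → K) : Prop :=
  (∀ (r : ℕ) (s : StdTab n), 1 ≤ r → r < n →
      (¬ ∃ u, IsEntrySwap u s r) → α r s = 0) ∧
  (∀ (r k : ℕ) (s u v : StdTab n), 1 ≤ r → r < n → 1 ≤ k → k < n →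
      (r + 1 < k ∨ k + 1 < r) →
      IsEntrySwap u s r → IsEntrySwap v s k →
      α r s * α k u = α k s * α r v) ∧
  (∀ (r : ℕ) (s u1 u2 v1 v2 : StdTab n), 1 ≤ r → r + 1 < n →
      IsEntrySwap u1 s r → IsEntrySwap u2 u1 (r + 1) →
      IsEntrySwap v1 s (r + 1) → IsEntrySwap v2 v1 r →
      α r u2 * α (r + 1) u1 * α r s = α (r + 1) v2 * α r v1 * α (r + 1) s) ∧
  (∀ (r : ℕ) (s v : StdTab n), 1 ≤ r → r < n → IsEntrySwap v s r →
      α r s * α r v =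
        qint t (1 + s.axialT r) * qint t (1 + v.axialT r) /
          (qint t (s.axialT r) * qint t (v.axialT r)))

/-- A seminormal basis of the Hecke algebra, with structure constants `γ`:
a basis of simultaneous eigenvectors for the Jucys–Murphy elements satisfying
`f_{st} f_{uv} = δ_{tu} γ_t f_{sv}`. -/
structure IsSNBasis (K : Type*) [Field K] (t : K) (n : ℕ)
    (f : StdPair n → Hecke K t n) (γ : StdTab n → K) : Prop where
  indep : LinearIndependent K f
  span : ⊤ ≤ Submodule.span K (Set.range f)
  eigL : ∀ (p : StdPair n) (k : ℕ), 1 ≤ k → k ≤ n →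
    JM K t n k * f p = qint t (p.left.contentT k) • f p
  eigR : ∀ (p : StdPair n) (k : ℕ), 1 ≤ k → k ≤ n →
    f p * JM K t n k = qint t (p.right.contentT k) • f p
  gammaMul : ∀ (p q : StdPair n) (h : p.right = q.left),
    f p * f q = γ p.right • f (p.comp q h)
  gammaOrth : ∀ p q : StdPair n, p.right ≠ q.left → f p * f q = 0
  gammaNe : ∀ s : StdTab n, γ s ≠ 0

/-- The seminormal basis `f` is associated to the seminormal coefficient system `α`:
`T_r f_{st} = α_r(s) f_{ut} - [ρ_r(s)]⁻¹ f_{st}` where `u = (r, r+1)s`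
(and the first term is omitted when `u` is not standard). -/
def SNTact (K : Type*) [Field K] (t : K) (n : ℕ) (f : StdPair n → Hecke K t n)
    (α : ℕ → StdTab n → K) : Prop :=
  ∀ (p : StdPair n) (r : ℕ) (hr : 1 ≤ r) (hrn : r < n),
    (∀ (u : StdTab n) (hu : IsEntrySwap u p.left r),
      Tgen K t n ⟨r - 1, by omega⟩ * f p =
        α r p.left • f (mkPair u p.right hu.1) - (qint t (p.left.axialT r))⁻¹ • f p) ∧
    ((¬ ∃ u, IsEntrySwap u p.left r) →
      Tgen K t n ⟨r - 1, by omega⟩ * f p = - (qint t (p.left.axialT r))⁻¹ • f p)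

/-- `st` is the unique anti-automorphism `*` of the Hecke algebra fixing the generators. -/
def IsStarHecke (K : Type*) [Field K] (t : K) (n : ℕ)
    (st : Hecke K t n →ₗ[K] Hecke K t n) : Prop :=
  (∀ x y, st (x * y) = st y * st x) ∧ ∀ r, st (Tgen K t n r) = Tgen K t n r

/-- The basis `f` is a `*`-seminormal basis: `f_{st}^* = f_{ts}`. -/
def IsStarBasis {K : Type*} [Field K] {t : K} {n : ℕ}
    (st : Hecke K t n →ₗ[K] Hecke K t n) (f : StdPair n → Hecke K t n) : Prop :=
  ∀ p, st (f p) = f p.swap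

/-- `(O, t)` is an `e`-idempotent subring of `K`. -/
structure IsIdemSubring (K : Type*) [Field K] (O : Subring K) (t : K) (e n : ℕ) : Prop where
  t_mem : t ∈ O
  t_unit : ∃ u ∈ O, t * u = 1
  qint_mem : ∀ k : ℤ, qint t k ∈ O
  ph_ne : poincare t n ≠ 0
  qint_unit : ∀ k : ℤ, ¬((e : ℤ) ∣ k) → ∃ u ∈ O, qint t k * u = 1
  qint_jac : ∀ k : ℤ, (e : ℤ) ∣ k →
    (⟨qint t k, qint_mem k⟩ : O) ∈ Ideal.jacobson (⊥ : Ideal O)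

/-- The Hecke algebra `H^O` over the subring `O`, realised as the subring of `H^K`
generated by (the image of) `O` and the generators `T_r`. -/
def HOsub (K : Type*) [Field K] (t : K) (n : ℕ) (O : Subring K) : Subring (Hecke K t n) :=
  Subring.closure ((fun o : K => algebraMap K (Hecke K t n) o) '' ↑O ∪ Set.range (Tgen K t n))

/-- The primitive idempotent `F_s = γ_s⁻¹ f_{ss}`. -/
noncomputable def Fidem (K : Type*) [Field K] (t : K) (n : ℕ)
    (f : StdPair n → Hecke K t n) (γ : StdTab n → K) (s : StdTab n) : Hecke K t n :=
  (γ s)⁻¹ • f s.diag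

/-- The residue idempotent `f_i^O = ∑_{s ∈ Std(i)} F_s`. -/
noncomputable def fres (K : Type*) [Field K] (t : K) (e n : ℕ)
    (f : StdPair n → Hecke K t n) (γ : StdTab n → K) (i : nseq e n) : Hecke K t n :=
  ∑ᶠ (s : StdTab n) (_ : s.resSeqT e = i), Fidem K t n f γ s

/-- The block idempotent `f_γ^O = ∑_{i ∈ I^γ} f_i^O`. -/
noncomputable def fgam (K : Type*) [Field K] (t : K) (e n : ℕ) [NeZero e]
    (f : StdPair n → Hecke K t n) (γ : StdTab n → K) (g : Qtilde e n) : Hecke K t n :=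
  ∑ i ∈ Iγ e n g, fres K t e n f γ i

/-! ### Block idempotents and block ideals in the quiver Hecke algebra -/

/-- The central idempotent `e_γ = ∑_{i ∈ I^γ} e(i)` of `R_n(S_n)`. -/
noncomputable def egam (Z : Type*) [CommRing Z] (e n : ℕ) [NeZero e] (g : Qtilde e n) :
    KLR Z e n Finset.univ :=
  ∑ i ∈ (Iγ e n g).attach, Egen Z e n Finset.univ i.1 (Finset.mem_univ _)

/-- The block `R_n(A_n)_γ` of the alternating quiver Hecke algebra: the `sgn`-fixed
elements of `R_γ = e_γ R_n(S_n)`, as a submodule of `R_n(S_n)`. -/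
noncomputable def RAnGammaSub (Z : Type*) [CommRing Z] (e n : ℕ) [NeZero e]
    (sgn : KLR Z e n Finset.univ ≃ₐ[Z] KLR Z e n Finset.univ) (g : Qtilde e n) :
    Submodule Z (KLR Z e n Finset.univ) where
  carrier := {x | sgn x = x ∧ egam Z e n g * x = x ∧ x * egam Z e n g = x}
  add_mem' := by
    intro a b ha hb
    refine ⟨?_, ?_, ?_⟩
    · rw [map_add, ha.1, hb.1]
    · rw [mul_add, ha.2.1, hb.2.1]
    · rw [add_mul, ha.2.2, hb.2.2]
  zero_mem' := by
    refine ⟨?_, ?_, ?_⟩ <;> simp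
  smul_mem' := by
    intro c a ha
    refine ⟨?_, ?_, ?_⟩
    · rw [map_smul, ha.1]
    · rw [mul_smul_comm, ha.2.1]
    · rw [smul_mul_assoc, ha.2.2]


/-- The degree-zero part of a graded algebra, as a subalgebra. -/
noncomputable def gradeZeroSubalgebra {ι : Type*} [DecidableEq ι] [AddMonoid ι] {R A : Type*}
    [CommRing R] [Ring A] [Algebra R A] (𝒜 : ι → Submodule R A)
    (inst : GradedAlgebra 𝒜) : Subalgebra R A :=
  letI := inst
  (𝒜 0).toSubalgebra (SetLike.one_mem_graded 𝒜)
    (fun x y hx hy => by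
      have h : x * y ∈ 𝒜 (0 + 0) := SetLike.mul_mem_graded hx hy
      rwa [zero_add] at h)

/-- The defect of the positive root attached to a residue sequence. -/
noncomputable def defect {e n : ℕ} (i : nseq e n) : ℤ := by
  classical
  exact ((mult i).count 0 : ℤ) -
    (∑ a ∈ (mult i).toFinset, ∑ b ∈ (mult i).toFinset,
      cartan e a b * ((mult i).count a : ℤ) * ((mult i).count b : ℤ)) / 2

/-! ### The presentation of the alternating quiver Hecke algebra (Theorem B) -/

/-- Generators `Ψ_r(i)`, `Y_s(i)`, `ε(i)` of the alternating quiver Hecke algebra. -/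
inductive AltGen (e n : ℕ) (S : Finset (nseq e n)) : Type
  | P (r : ℕ) (h : r + 1 < n) (i : nseq e n) (hi : i ∈ S)
  | Y (s : ℕ) (hs : s < n) (i : nseq e n) (hi : i ∈ S)
  | E (i : nseq e n) (hi : i ∈ S)

section AltPresentation

variable (Z : Type*) [CommRing Z] (e n : ℕ) (S : Finset (nseq e n))

def aP (r : ℕ) (h : r + 1 < n) (i : nseq e n) (hi : i ∈ S) : FreeAlgebra Z (AltGen e n S) :=
  FreeAlgebra.ι Z (AltGen.P r h i hi)

def aY (s : ℕ) (hs : s < n) (i : nseq e n) (hi : i ∈ S) : FreeAlgebra Z (AltGen e n S) :=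
  FreeAlgebra.ι Z (AltGen.Y s hs i hi)

def aE (i : nseq e n) (hi : i ∈ S) : FreeAlgebra Z (AltGen e n S) :=
  FreeAlgebra.ι Z (AltGen.E i hi)

/-- The defining relations of the alternating quiver Hecke algebra (Theorem B). -/
inductive AltRel [Invertible (2 : Z)] :
    FreeAlgebra Z (AltGen e n S) → FreeAlgebra Z (AltGen e n S) → Prop
  | cyc (i : nseq e n) (hi : i ∈ S) (h0 : 0 < n) :
      AltRel (if i ⟨0, h0⟩ = 0 then aY Z e n S 0 h0 i hi else aE Z e n S i hi) 0
  | idem_mul (i j : nseq e n) (hi : i ∈ S) (hj : j ∈ S) :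
      AltRel (aE Z e n S i hi * aE Z e n S j hj)
        (if j = i ∨ j = -i then aE Z e n S i hi else 0)
  | idem_sum : AltRel (∑ i ∈ S.attach, (⅟(2 : Z)) • aE Z e n S i.1 i.2) 1
  | y_neg (s : ℕ) (hs : s < n) (i : nseq e n) (hi : i ∈ S) (hni : -i ∈ S) :
      AltRel (aY Z e n S s hs (-i) hni) (- aY Z e n S s hs i hi)
  | psi_neg (r : ℕ) (h : r + 1 < n) (i : nseq e n) (hi : i ∈ S) (hni : -i ∈ S) :
      AltRel (aP Z e n S r h (-i) hni) (- aP Z e n S r h i hi)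
  | eps_neg (i : nseq e n) (hi : i ∈ S) (hni : -i ∈ S) :
      AltRel (aE Z e n S (-i) hni) (aE Z e n S i hi)
  | eYe (s : ℕ) (hs : s < n) (i j k : nseq e n) (hi : i ∈ S) (hj : j ∈ S) (hk : k ∈ S) :
      AltRel (aE Z e n S i hi * aY Z e n S s hs j hj * aE Z e n S k hk)
        (if i = j ∧ j = k then aY Z e n S s hs j hj else 0)
  | ePe (r : ℕ) (h : r + 1 < n) (i j k : nseq e n) (hi : i ∈ S) (hj : j ∈ S) (hk : k ∈ S) :
      AltRel (aE Z e n S i hi * aP Z e n S r h j hj * aE Z e n S k hk)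
        (if swapSeq r h i = j ∧ j = k then aP Z e n S r h j hj else 0)
  | yy (r : ℕ) (hr : r < n) (s : ℕ) (hs : s < n) (i j : nseq e n) (hi : i ∈ S) (hj : j ∈ S) :
      AltRel (aY Z e n S r hr i hi * aY Z e n S s hs j hj)
        (if i = j then aY Z e n S s hs i hi * aY Z e n S r hr j hj else 0)
  | psi_y_succ (r : ℕ) (h : r + 1 < n) (i : nseq e n) (hi : i ∈ S) (hsi : swapSeq r h i ∈ S) :
      AltRel (aP Z e n S r h i hi * aY Z e n S (r + 1) h i hi)
        (aY Z e n S r (Nat.lt_of_succ_lt h) (swapSeq r h i) hsi * aP Z e n S r h i hi +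
          if i ⟨r, Nat.lt_of_succ_lt h⟩ = i ⟨r + 1, h⟩ then aE Z e n S i hi else 0)
  | y_succ_psi (r : ℕ) (h : r + 1 < n) (i : nseq e n) (hi : i ∈ S) (hsi : swapSeq r h i ∈ S) :
      AltRel (aY Z e n S (r + 1) h (swapSeq r h i) hsi * aP Z e n S r h i hi)
        (aP Z e n S r h i hi * aY Z e n S r (Nat.lt_of_succ_lt h) i hi +
          if i ⟨r, Nat.lt_of_succ_lt h⟩ = i ⟨r + 1, h⟩ then aE Z e n S i hi else 0)
  | psi_y_far (r : ℕ) (h : r + 1 < n) (s : ℕ) (hs : s < n) (hfar : s ≠ r ∧ s ≠ r + 1)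
      (i : nseq e n) (hi : i ∈ S) (hsi : swapSeq r h i ∈ S) :
      AltRel (aP Z e n S r h i hi * aY Z e n S s hs i hi)
        (aY Z e n S s hs (swapSeq r h i) hsi * aP Z e n S r h i hi)
  | psi_psi_far (r : ℕ) (h : r + 1 < n) (u : ℕ) (hu : u + 1 < n)
      (hfar : r + 1 < u ∨ u + 1 < r) (i : nseq e n) (hi : i ∈ S)
      (h1 : swapSeq u hu i ∈ S) (h2 : swapSeq r h i ∈ S) :
      AltRel (aP Z e n S r h (swapSeq u hu i) h1 * aP Z e n S u hu i hi)
        (aP Z e n S u hu (swapSeq r h i) h2 * aP Z e n S r h i hi)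
  | quad (r : ℕ) (h : r + 1 < n) (i : nseq e n) (hi : i ∈ S) (hsi : swapSeq r h i ∈ S) :
      AltRel (aP Z e n S r h (swapSeq r h i) hsi * aP Z e n S r h i hi)
        (if i ⟨r, Nat.lt_of_succ_lt h⟩ = i ⟨r + 1, h⟩ then 0
         else if i ⟨r + 1, h⟩ = i ⟨r, Nat.lt_of_succ_lt h⟩ + 1 then
          aY Z e n S r (Nat.lt_of_succ_lt h) i hi - aY Z e n S (r + 1) h i hi
         else if i ⟨r, Nat.lt_of_succ_lt h⟩ = i ⟨r + 1, h⟩ + 1 then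
          aY Z e n S (r + 1) h i hi - aY Z e n S r (Nat.lt_of_succ_lt h) i hi
         else aE Z e n S i hi)
  | braid (r : ℕ) (h2 : r + 2 < n) (i : nseq e n) (hi : i ∈ S)
      (hA : swapSeq (r + 1) h2 (swapSeq r (Nat.lt_of_succ_lt h2) i) ∈ S)
      (hB : swapSeq r (Nat.lt_of_succ_lt h2) i ∈ S)
      (hC : swapSeq r (Nat.lt_of_succ_lt h2) (swapSeq (r + 1) h2 i) ∈ S)
      (hD : swapSeq (r + 1) h2 i ∈ S) :
      AltRel
        (aP Z e n S r (Nat.lt_of_succ_lt h2)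
            (swapSeq (r + 1) h2 (swapSeq r (Nat.lt_of_succ_lt h2) i)) hA *
          aP Z e n S (r + 1) h2 (swapSeq r (Nat.lt_of_succ_lt h2) i) hB *
          aP Z e n S r (Nat.lt_of_succ_lt h2) i hi -
         aP Z e n S (r + 1) h2
            (swapSeq r (Nat.lt_of_succ_lt h2) (swapSeq (r + 1) h2 i)) hC *
          aP Z e n S r (Nat.lt_of_succ_lt h2) (swapSeq (r + 1) h2 i) hD *
          aP Z e n S (r + 1) h2 i hi)
        (if i ⟨r, by omega⟩ = i ⟨r + 2, h2⟩ ∧ i ⟨r, by omega⟩ = i ⟨r + 1, by omega⟩ + 1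
          then aE Z e n S i hi
         else if i ⟨r, by omega⟩ = i ⟨r + 2, h2⟩ ∧ i ⟨r + 1, by omega⟩ = i ⟨r, by omega⟩ + 1
          then - aE Z e n S i hi
         else 0)

/-- The algebra with the presentation of Theorem B (the block `R_n(A_n)_γ` for `S = I^γ`). -/
abbrev AltKLR [Invertible (2 : Z)] := RingQuot (AltRel Z e n S)

noncomputable def AltΨ [Invertible (2 : Z)] (r : ℕ) (h : r + 1 < n) (i : nseq e n)
    (hi : i ∈ S) : AltKLR Z e n S :=
  RingQuot.mkAlgHom Z (AltRel Z e n S) (aP Z e n S r h i hi)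

noncomputable def AltY [Invertible (2 : Z)] (s : ℕ) (hs : s < n) (i : nseq e n)
    (hi : i ∈ S) : AltKLR Z e n S :=
  RingQuot.mkAlgHom Z (AltRel Z e n S) (aY Z e n S s hs i hi)

noncomputable def AltE [Invertible (2 : Z)] (i : nseq e n) (hi : i ∈ S) : AltKLR Z e n S :=
  RingQuot.mkAlgHom Z (AltRel Z e n S) (aE Z e n S i hi)

/-- The grading of the alternating quiver Hecke algebra:
`deg ε(i) = 0`, `deg Y_r(i) = 2`, `deg Ψ_r(i) = -(α_{i_r}, α_{i_{r+1}})`. -/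
def AltGradingSpec [Invertible (2 : Z)] (𝒜 : ℤ → Submodule Z (AltKLR Z e n S)) : Prop :=
  (∀ (i : nseq e n) (hi : i ∈ S), AltE Z e n S i hi ∈ 𝒜 0) ∧
  (∀ (s : ℕ) (hs : s < n) (i : nseq e n) (hi : i ∈ S), AltY Z e n S s hs i hi ∈ 𝒜 2) ∧
  (∀ (r : ℕ) (h : r + 1 < n) (i : nseq e n) (hi : i ∈ S),
    AltΨ Z e n S r h i hi ∈ 𝒜 (- cartan e (i ⟨r, Nat.lt_of_succ_lt h⟩) (i ⟨r + 1, h⟩)))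

end AltPresentation

/-! ### The `(ℤ/2 × ℤ)`-graded presentation `R'_γ` (Definition 1.9) -/

/-- Generators `ψ_r`, `y_s`, `ε_a(i)` of `R'_γ`. -/
inductive SupGen (e n : ℕ) (S : Finset (nseq e n)) : Type
  | psi (r : ℕ) (h : r + 1 < n)
  | y (s : ℕ) (hs : s < n)
  | eps (a : ZMod 2) (i : nseq e n) (hi : i ∈ S)

section SupPresentation

variable (Z : Type*) [CommRing Z] (e n : ℕ) (S : Finset (nseq e n))

def sψ (r : ℕ) (h : r + 1 < n) : FreeAlgebra Z (SupGen e n S) :=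
  FreeAlgebra.ι Z (SupGen.psi r h)

def sy (s : ℕ) (hs : s < n) : FreeAlgebra Z (SupGen e n S) :=
  FreeAlgebra.ι Z (SupGen.y s hs)

def sε (a : ZMod 2) (i : nseq e n) (hi : i ∈ S) : FreeAlgebra Z (SupGen e n S) :=
  FreeAlgebra.ι Z (SupGen.eps a i hi)

/-- The defining relations of `R'_γ` (Definition 1.9 of the paper). -/
inductive SupRel [Invertible (2 : Z)] :
    FreeAlgebra Z (SupGen e n S) → FreeAlgebra Z (SupGen e n S) → Prop
  | cyc (i : nseq e n) (hi : i ∈ S) (h0 : 0 < n) :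
      SupRel ((sy Z e n S 0 h0) ^ (if i ⟨0, h0⟩ = 0 then 1 else 0) * sε Z e n S 0 i hi) 0
  | eps_sum : SupRel (∑ i ∈ S.attach, (⅟(2 : Z)) • sε Z e n S 0 i.1 i.2) 1
  | eps0_mul (i j : nseq e n) (hi : i ∈ S) (hj : j ∈ S) :
      SupRel (sε Z e n S 0 i hi * sε Z e n S 0 j hj)
        (if j = i ∨ j = -i then sε Z e n S 0 i hi else 0)
  | eps_add (a b : ZMod 2) (i : nseq e n) (hi : i ∈ S) :
      SupRel (sε Z e n S a i hi * sε Z e n S b i hi) (sε Z e n S (a + b) i hi)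
  | eps_neg (a : ZMod 2) (i : nseq e n) (hi : i ∈ S) (hni : -i ∈ S) :
      SupRel (sε Z e n S a i hi)
        (if a = 0 then sε Z e n S a (-i) hni else - sε Z e n S a (-i) hni)
  | psi_eps (r : ℕ) (h : r + 1 < n) (a : ZMod 2) (i : nseq e n) (hi : i ∈ S)
      (hsi : swapSeq r h i ∈ S) :
      SupRel (sψ Z e n S r h * sε Z e n S a i hi)
        (sε Z e n S a (swapSeq r h i) hsi * sψ Z e n S r h)
  | y_eps (s : ℕ) (hs : s < n) (a : ZMod 2) (i : nseq e n) (hi : i ∈ S) :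
      SupRel (sy Z e n S s hs * sε Z e n S a i hi) (sε Z e n S a i hi * sy Z e n S s hs)
  | yy (r : ℕ) (hr : r < n) (s : ℕ) (hs : s < n) (i : nseq e n) (hi : i ∈ S) :
      SupRel (sy Z e n S r hr * sy Z e n S s hs * sε Z e n S 1 i hi)
        (sy Z e n S s hs * sy Z e n S r hr * sε Z e n S 1 i hi)
  | psi_y_succ (r : ℕ) (h : r + 1 < n) (i : nseq e n) (hi : i ∈ S) :
      SupRel (sψ Z e n S r h * sy Z e n S (r + 1) h * sε Z e n S 1 i hi)
        ((sy Z e n S r (Nat.lt_of_succ_lt h) * sψ Z e n S r h +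
          if i ⟨r, Nat.lt_of_succ_lt h⟩ = i ⟨r + 1, h⟩ then 1 else 0) * sε Z e n S 1 i hi)
  | y_succ_psi (r : ℕ) (h : r + 1 < n) (i : nseq e n) (hi : i ∈ S) :
      SupRel (sy Z e n S (r + 1) h * sψ Z e n S r h * sε Z e n S 1 i hi)
        ((sψ Z e n S r h * sy Z e n S r (Nat.lt_of_succ_lt h) +
          if i ⟨r, Nat.lt_of_succ_lt h⟩ = i ⟨r + 1, h⟩ then 1 else 0) * sε Z e n S 1 i hi)
  | psi_y_far (r : ℕ) (h : r + 1 < n) (s : ℕ) (hs : s < n) (hfar : s ≠ r ∧ s ≠ r + 1)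
      (i : nseq e n) (hi : i ∈ S) :
      SupRel (sψ Z e n S r h * sy Z e n S s hs * sε Z e n S 1 i hi)
        (sy Z e n S s hs * sψ Z e n S r h * sε Z e n S 1 i hi)
  | psi_psi_far (r : ℕ) (h : r + 1 < n) (u : ℕ) (hu : u + 1 < n)
      (hfar : r + 1 < u ∨ u + 1 < r) (i : nseq e n) (hi : i ∈ S) :
      SupRel (sψ Z e n S r h * sψ Z e n S u hu * sε Z e n S 1 i hi)
        (sψ Z e n S u hu * sψ Z e n S r h * sε Z e n S 1 i hi)
  | quad (r : ℕ) (h : r + 1 < n) (i : nseq e n) (hi : i ∈ S) :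
      SupRel (sψ Z e n S r h ^ 2 * sε Z e n S 1 i hi)
        (if i ⟨r, Nat.lt_of_succ_lt h⟩ = i ⟨r + 1, h⟩ then 0
         else if i ⟨r + 1, h⟩ = i ⟨r, Nat.lt_of_succ_lt h⟩ + 1 then
          (sy Z e n S r (Nat.lt_of_succ_lt h) - sy Z e n S (r + 1) h) * sε Z e n S 0 i hi
         else if i ⟨r, Nat.lt_of_succ_lt h⟩ = i ⟨r + 1, h⟩ + 1 then
          (sy Z e n S (r + 1) h - sy Z e n S r (Nat.lt_of_succ_lt h)) * sε Z e n S 0 i hi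
         else sε Z e n S 1 i hi)
  | braid (r : ℕ) (h2 : r + 2 < n) (i : nseq e n) (hi : i ∈ S) :
      SupRel
        (sψ Z e n S r (Nat.lt_of_succ_lt h2) * sψ Z e n S (r + 1) h2 *
          sψ Z e n S r (Nat.lt_of_succ_lt h2) * sε Z e n S 0 i hi)
        (sψ Z e n S (r + 1) h2 * sψ Z e n S r (Nat.lt_of_succ_lt h2) *
          sψ Z e n S (r + 1) h2 * sε Z e n S 0 i hi +
          (if i ⟨r, by omega⟩ = i ⟨r + 2, h2⟩ ∧ i ⟨r + 1, by omega⟩ = i ⟨r, by omega⟩ + 1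
            then - sε Z e n S 1 i hi
           else if i ⟨r, by omega⟩ = i ⟨r + 2, h2⟩ ∧ i ⟨r, by omega⟩ = i ⟨r + 1, by omega⟩ + 1
            then sε Z e n S 1 i hi
           else 0))

/-- The `(ℤ/2 × ℤ)`-graded algebra `R'_γ` of Definition 1.9 (for `S = I^γ`). -/
abbrev SupKLR [Invertible (2 : Z)] := RingQuot (SupRel Z e n S)

noncomputable def SupΨ [Invertible (2 : Z)] (r : ℕ) (h : r + 1 < n) : SupKLR Z e n S :=
  RingQuot.mkAlgHom Z (SupRel Z e n S) (sψ Z e n S r h)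

noncomputable def SupY [Invertible (2 : Z)] (s : ℕ) (hs : s < n) : SupKLR Z e n S :=
  RingQuot.mkAlgHom Z (SupRel Z e n S) (sy Z e n S s hs)

noncomputable def SupE [Invertible (2 : Z)] (a : ZMod 2) (i : nseq e n) (hi : i ∈ S) :
    SupKLR Z e n S :=
  RingQuot.mkAlgHom Z (SupRel Z e n S) (sε Z e n S a i hi)

/-- The `(ℤ/2 × ℤ)`-grading of `R'_γ`: `Deg ψ_r ε_0(i) = (1, -c_{i_r,i_{r+1}})`,
`Deg y_s = (1, 2)`, `Deg ε_a(i) = (a, 0)`. -/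
def SupSuperGradingSpec [Invertible (2 : Z)]
    (𝒜 : ZMod 2 × ℤ → Submodule Z (SupKLR Z e n S)) : Prop :=
  (∀ (s : ℕ) (hs : s < n), SupY Z e n S s hs ∈ 𝒜 (1, 2)) ∧
  (∀ (a : ZMod 2) (i : nseq e n) (hi : i ∈ S), SupE Z e n S a i hi ∈ 𝒜 (a, 0)) ∧
  (∀ (r : ℕ) (h : r + 1 < n) (i : nseq e n) (hi : i ∈ S),
    SupΨ Z e n S r h * SupE Z e n S 0 i hi ∈
      𝒜 (1, - cartan e (i ⟨r, Nat.lt_of_succ_lt h⟩) (i ⟨r + 1, h⟩)))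

/-- The `ℤ`-grading of `R'_γ` obtained by forgetting the `ℤ/2`-grading. -/
def SupZGradingSpec [Invertible (2 : Z)] (𝒜 : ℤ → Submodule Z (SupKLR Z e n S)) : Prop :=
  (∀ (s : ℕ) (hs : s < n), SupY Z e n S s hs ∈ 𝒜 2) ∧
  (∀ (a : ZMod 2) (i : nseq e n) (hi : i ∈ S), SupE Z e n S a i hi ∈ 𝒜 0) ∧
  (∀ (r : ℕ) (h : r + 1 < n) (i : nseq e n) (hi : i ∈ S),
    SupΨ Z e n S r h * SupE Z e n S 0 i hi ∈
      𝒜 (- cartan e (i ⟨r, Nat.lt_of_succ_lt h⟩) (i ⟨r + 1, h⟩)))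

end SupPresentation

/-! ### The deformed KLR presentation `R^O_γ` over an idempotent subring (Definition 2.29) -/

/-- Quantum integers over a commutative ring, for an invertible parameter. -/
def qintu {O : Type*} [CommRing O] (tu : Oˣ) (k : ℤ) : O :=
  if 0 ≤ k then ∑ j ∈ Finset.range k.toNat, ((tu : O)) ^ j
  else -∑ j ∈ Finset.range (-k).toNat, (((tu⁻¹ : Oˣ) : O)) ^ (j + 1)

/-- `i ∈ I^n_+`. -/
def IsPlusSeq {e n : ℕ} (i : nseq e n) : Prop :=
  ∃ (h0 : 0 < n) (h1 : 1 < n), i ⟨0, h0⟩ = 0 ∧ i ⟨1, h1⟩ = 1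

/-- `i ∈ I^n_-`. -/
def IsMinusSeq {e n : ℕ} (i : nseq e n) : Prop :=
  ∃ (h0 : 0 < n) (h1 : 1 < n), i ⟨0, h0⟩ = 0 ∧ i ⟨1, h1⟩ = -1

/-- `ρ_r(i) = î_r - î_{r+1}`, using the canonical lifts `î ∈ [0, e)`. -/
def rhoInt {e n : ℕ} [NeZero e] (i : nseq e n) (r : ℕ) (h : r + 1 < n) : ℤ :=
  ((i ⟨r, Nat.lt_of_succ_lt h⟩).val : ℤ) - ((i ⟨r + 1, h⟩).val : ℤ)

section DROPresentation

variable (O : Type*) [CommRing O] (tu : Oˣ) (e n : ℕ) [NeZero e] (S : Finset (nseq e n))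

/-- `⟨d⟩_r = t^d y_r - [d]` (the `I^γ_+` version). -/
noncomputable def dyoP (d : ℤ) (r : ℕ) (hr : r < n) : FreeAlgebra O (KLRGen e n S) :=
  (((tu ^ d : Oˣ) : O)) • fy O e n S r hr - algebraMap O _ (qintu tu d)

/-- `⟨d⟩_r = t^d y_r + [d]` (the `I^γ_-` version). -/
noncomputable def dyoM (d : ℤ) (r : ℕ) (hr : r < n) : FreeAlgebra O (KLRGen e n S) :=
  (((tu ^ d : Oˣ) : O)) • fy O e n S r hr + algebraMap O _ (qintu tu d)

/-- The relations of the deformed KLR presentation `R^O_γ` of Definition 2.29 of the paper. -/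
inductive DRORel : FreeAlgebra O (KLRGen e n S) → FreeAlgebra O (KLRGen e n S) → Prop
  | cyc (i : nseq e n) (hi : i ∈ S) (h0 : 0 < n) :
      DRORel ((fy O e n S 0 h0) ^ (if i ⟨0, h0⟩ = 0 then 1 else 0) * fe O e n S i hi) 0
  | idem_mul (i j : nseq e n) (hi : i ∈ S) (hj : j ∈ S) :
      DRORel (fe O e n S i hi * fe O e n S j hj) (if i = j then fe O e n S i hi else 0)
  | idem_sum : DRORel (∑ i ∈ S.attach, fe O e n S i.1 i.2) 1
  | y_idem (s : ℕ) (hs : s < n) (i : nseq e n) (hi : i ∈ S) :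
      DRORel (fy O e n S s hs * fe O e n S i hi) (fe O e n S i hi * fy O e n S s hs)
  | psi_idem (r : ℕ) (h : r + 1 < n) (i : nseq e n) (hi : i ∈ S) (hsi : swapSeq r h i ∈ S) :
      DRORel (fψ O e n S r h * fe O e n S i hi)
        (fe O e n S (swapSeq r h i) hsi * fψ O e n S r h)
  | yy (s : ℕ) (hs : s < n) (u : ℕ) (hu : u < n) :
      DRORel (fy O e n S s hs * fy O e n S u hu) (fy O e n S u hu * fy O e n S s hs)
  | psi_y_far (r : ℕ) (h : r + 1 < n) (s : ℕ) (hs : s < n) (hfar : s ≠ r ∧ s ≠ r + 1) :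
      DRORel (fψ O e n S r h * fy O e n S s hs) (fy O e n S s hs * fψ O e n S r h)
  | psi_psi_far (r : ℕ) (h : r + 1 < n) (s : ℕ) (hs : s + 1 < n)
      (hfar : r + 1 < s ∨ s + 1 < r) :
      DRORel (fψ O e n S r h * fψ O e n S s hs) (fψ O e n S s hs * fψ O e n S r h)
  -- `ψ_1 y_2 e(i) = (y_1 ψ_1 + δ_{i_1 i_2}) e(i)` and its mirror (paper index `r = 1`)
  | psi_y_one (h : 1 < n) (i : nseq e n) (hi : i ∈ S) :
      DRORel (fψ O e n S 0 h * fy O e n S 1 h * fe O e n S i hi)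
        ((fy O e n S 0 (by omega) * fψ O e n S 0 h +
          if i ⟨0, by omega⟩ = i ⟨1, h⟩ then 1 else 0) * fe O e n S i hi)
  | y_one_psi (h : 1 < n) (i : nseq e n) (hi : i ∈ S) :
      DRORel (fy O e n S 1 h * fψ O e n S 0 h * fe O e n S i hi)
        ((fψ O e n S 0 h * fy O e n S 0 (by omega) +
          if i ⟨0, by omega⟩ = i ⟨1, h⟩ then 1 else 0) * fe O e n S i hi)
  -- `ψ_2 y_3 e(i) = (⟨-e⟩_2 ψ_2 + δ_{i_2 i_3}) e(i)` and its mirror (paper index `r = 2`)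
  | psi_y_two_plus (h : 2 < n) (i : nseq e n) (hi : i ∈ S) (hp : IsPlusSeq i) :
      DRORel (fψ O e n S 1 h * fy O e n S 2 h * fe O e n S i hi)
        ((dyoP O tu e n S (-(e : ℤ)) 1 (by omega) * fψ O e n S 1 h +
          if i ⟨1, by omega⟩ = i ⟨2, h⟩ then 1 else 0) * fe O e n S i hi)
  | psi_y_two_minus (h : 2 < n) (i : nseq e n) (hi : i ∈ S) (hm : IsMinusSeq i) :
      DRORel (fψ O e n S 1 h * fy O e n S 2 h * fe O e n S i hi)
        ((dyoM O tu e n S (-(e : ℤ)) 1 (by omega) * fψ O e n S 1 h +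
          if i ⟨1, by omega⟩ = i ⟨2, h⟩ then 1 else 0) * fe O e n S i hi)
  | y_two_psi_plus (h : 2 < n) (i : nseq e n) (hi : i ∈ S) (hp : IsPlusSeq i) :
      DRORel (fy O e n S 2 h * fψ O e n S 1 h * fe O e n S i hi)
        ((fψ O e n S 1 h * dyoP O tu e n S (-(e : ℤ)) 1 (by omega) +
          if i ⟨1, by omega⟩ = i ⟨2, h⟩ then 1 else 0) * fe O e n S i hi)
  | y_two_psi_minus (h : 2 < n) (i : nseq e n) (hi : i ∈ S) (hm : IsMinusSeq i) :
      DRORel (fy O e n S 2 h * fψ O e n S 1 h * fe O e n S i hi)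
        ((fψ O e n S 1 h * dyoM O tu e n S (-(e : ℤ)) 1 (by omega) +
          if i ⟨1, by omega⟩ = i ⟨2, h⟩ then 1 else 0) * fe O e n S i hi)
  -- standard commutation for `2 < r < n` (0-indexed: `2 ≤ r`)
  | psi_y_succ_high (r : ℕ) (h : r + 1 < n) (hr : 2 ≤ r) (i : nseq e n) (hi : i ∈ S) :
      DRORel (fψ O e n S r h * fy O e n S (r + 1) h * fe O e n S i hi)
        ((fy O e n S r (Nat.lt_of_succ_lt h) * fψ O e n S r h +
          if i ⟨r, Nat.lt_of_succ_lt h⟩ = i ⟨r + 1, h⟩ then 1 else 0) * fe O e n S i hi)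
  | y_succ_psi_high (r : ℕ) (h : r + 1 < n) (hr : 2 ≤ r) (i : nseq e n) (hi : i ∈ S) :
      DRORel (fy O e n S (r + 1) h * fψ O e n S r h * fe O e n S i hi)
        ((fψ O e n S r h * fy O e n S r (Nat.lt_of_succ_lt h) +
          if i ⟨r, Nat.lt_of_succ_lt h⟩ = i ⟨r + 1, h⟩ then 1 else 0) * fe O e n S i hi)
  -- undeformed quadratic relations for `r = 1, 2` (0-indexed `r < 2`)
  | quad_low (r : ℕ) (h : r + 1 < n) (hr : r < 2) (i : nseq e n) (hi : i ∈ S) :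
      DRORel (fψ O e n S r h ^ 2 * fe O e n S i hi)
        (if i ⟨r, Nat.lt_of_succ_lt h⟩ = i ⟨r + 1, h⟩ then 0
         else if i ⟨r + 1, h⟩ = i ⟨r, Nat.lt_of_succ_lt h⟩ + 1 then
          (fy O e n S r (Nat.lt_of_succ_lt h) - fy O e n S (r + 1) h) * fe O e n S i hi
         else if i ⟨r, Nat.lt_of_succ_lt h⟩ = i ⟨r + 1, h⟩ + 1 then
          (fy O e n S (r + 1) h - fy O e n S r (Nat.lt_of_succ_lt h)) * fe O e n S i hi
         else fe O e n S i hi)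
  -- deformed quadratic relations for `2 < r` (0-indexed `2 ≤ r`)
  | quad_eq (r : ℕ) (h : r + 1 < n) (hr : 2 ≤ r) (i : nseq e n) (hi : i ∈ S)
      (heq : i ⟨r, Nat.lt_of_succ_lt h⟩ = i ⟨r + 1, h⟩) :
      DRORel (fψ O e n S r h ^ 2 * fe O e n S i hi) 0
  | quad_plus_arrow (r : ℕ) (h : r + 1 < n) (hr : 2 ≤ r) (i : nseq e n) (hi : i ∈ S)
      (hp : IsPlusSeq i) (ha : i ⟨r + 1, h⟩ = i ⟨r, Nat.lt_of_succ_lt h⟩ + 1) :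
      DRORel (fψ O e n S r h ^ 2 * fe O e n S i hi)
        ((dyoP O tu e n S (1 + rhoInt i r h) r (Nat.lt_of_succ_lt h) -
          fy O e n S (r + 1) h) * fe O e n S i hi)
  | quad_minus_left (r : ℕ) (h : r + 1 < n) (hr : 2 ≤ r) (i : nseq e n) (hi : i ∈ S)
      (hm : IsMinusSeq i) (hl : i ⟨r, Nat.lt_of_succ_lt h⟩ = i ⟨r + 1, h⟩ + 1) :
      DRORel (fψ O e n S r h ^ 2 * fe O e n S i hi)
        ((fy O e n S (r + 1) h -
          dyoM O tu e n S (1 - rhoInt i r h) r (Nat.lt_of_succ_lt h)) * fe O e n S i hi)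
  | quad_plus_left (r : ℕ) (h : r + 1 < n) (hr : 2 ≤ r) (i : nseq e n) (hi : i ∈ S)
      (hp : IsPlusSeq i) (hl : i ⟨r, Nat.lt_of_succ_lt h⟩ = i ⟨r + 1, h⟩ + 1) :
      DRORel (fψ O e n S r h ^ 2 * fe O e n S i hi)
        ((dyoP O tu e n S (1 - rhoInt i r h) (r + 1) h - fy O e n S r (Nat.lt_of_succ_lt h)) *
          fe O e n S i hi)
  | quad_minus_arrow (r : ℕ) (h : r + 1 < n) (hr : 2 ≤ r) (i : nseq e n) (hi : i ∈ S)
      (hm : IsMinusSeq i) (ha : i ⟨r + 1, h⟩ = i ⟨r, Nat.lt_of_succ_lt h⟩ + 1) :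
      DRORel (fψ O e n S r h ^ 2 * fe O e n S i hi)
        ((fy O e n S r (Nat.lt_of_succ_lt h) - dyoM O tu e n S (1 + rhoInt i r h) (r + 1) h) *
          fe O e n S i hi)
  | quad_other (r : ℕ) (h : r + 1 < n) (hr : 2 ≤ r) (i : nseq e n) (hi : i ∈ S)
      (h1 : i ⟨r, Nat.lt_of_succ_lt h⟩ ≠ i ⟨r + 1, h⟩)
      (h2 : i ⟨r + 1, h⟩ ≠ i ⟨r, Nat.lt_of_succ_lt h⟩ + 1)
      (h3 : i ⟨r, Nat.lt_of_succ_lt h⟩ ≠ i ⟨r + 1, h⟩ + 1) :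
      DRORel (fψ O e n S r h ^ 2 * fe O e n S i hi) (fe O e n S i hi)
  -- undeformed braid relations for `r = 1, 2` (0-indexed `r < 2`)
  | braid_low (r : ℕ) (h2 : r + 2 < n) (hr : r < 2) (i : nseq e n) (hi : i ∈ S) :
      DRORel
        (fψ O e n S r (Nat.lt_of_succ_lt h2) * fψ O e n S (r + 1) h2 *
          fψ O e n S r (Nat.lt_of_succ_lt h2) * fe O e n S i hi)
        (fψ O e n S (r + 1) h2 * fψ O e n S r (Nat.lt_of_succ_lt h2) *
          fψ O e n S (r + 1) h2 * fe O e n S i hi +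
          (if i ⟨r, by omega⟩ = i ⟨r + 2, h2⟩ ∧ i ⟨r + 1, by omega⟩ = i ⟨r, by omega⟩ + 1
            then -1
           else if i ⟨r, by omega⟩ = i ⟨r + 2, h2⟩ ∧ i ⟨r, by omega⟩ = i ⟨r + 1, by omega⟩ + 1
            then 1
           else 0) * fe O e n S i hi)
  -- deformed braid relations for `2 < r` (0-indexed `2 ≤ r`)
  | braid_plus_arrow (r : ℕ) (h2 : r + 2 < n) (hr : 2 ≤ r) (i : nseq e n) (hi : i ∈ S)
      (hp : IsPlusSeq i) (hres : i ⟨r, by omega⟩ = i ⟨r + 2, h2⟩)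
      (ha : i ⟨r + 1, by omega⟩ = i ⟨r, by omega⟩ + 1) :
      DRORel
        (fψ O e n S r (Nat.lt_of_succ_lt h2) * fψ O e n S (r + 1) h2 *
          fψ O e n S r (Nat.lt_of_succ_lt h2) * fe O e n S i hi)
        ((fψ O e n S (r + 1) h2 * fψ O e n S r (Nat.lt_of_succ_lt h2) *
          fψ O e n S (r + 1) h2 -
          algebraMap O _ (((tu ^ (1 + rhoInt i r (Nat.lt_of_succ_lt h2)) : Oˣ) : O))) *
          fe O e n S i hi)
  | braid_minus_left (r : ℕ) (h2 : r + 2 < n) (hr : 2 ≤ r) (i : nseq e n) (hi : i ∈ S)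
      (hm : IsMinusSeq i) (hres : i ⟨r, by omega⟩ = i ⟨r + 2, h2⟩)
      (hl : i ⟨r, by omega⟩ = i ⟨r + 1, by omega⟩ + 1) :
      DRORel
        (fψ O e n S r (Nat.lt_of_succ_lt h2) * fψ O e n S (r + 1) h2 *
          fψ O e n S r (Nat.lt_of_succ_lt h2) * fe O e n S i hi)
        ((fψ O e n S (r + 1) h2 * fψ O e n S r (Nat.lt_of_succ_lt h2) *
          fψ O e n S (r + 1) h2 +
          algebraMap O _ (((tu ^ (1 - rhoInt i r (Nat.lt_of_succ_lt h2)) : Oˣ) : O))) *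
          fe O e n S i hi)
  | braid_minus_arrow (r : ℕ) (h2 : r + 2 < n) (hr : 2 ≤ r) (i : nseq e n) (hi : i ∈ S)
      (hm : IsMinusSeq i) (hres : i ⟨r, by omega⟩ = i ⟨r + 2, h2⟩)
      (ha : i ⟨r + 1, by omega⟩ = i ⟨r, by omega⟩ + 1) :
      DRORel
        (fψ O e n S r (Nat.lt_of_succ_lt h2) * fψ O e n S (r + 1) h2 *
          fψ O e n S r (Nat.lt_of_succ_lt h2) * fe O e n S i hi)
        ((fψ O e n S (r + 1) h2 * fψ O e n S r (Nat.lt_of_succ_lt h2) *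
          fψ O e n S (r + 1) h2 - 1) * fe O e n S i hi)
  | braid_plus_left (r : ℕ) (h2 : r + 2 < n) (hr : 2 ≤ r) (i : nseq e n) (hi : i ∈ S)
      (hp : IsPlusSeq i) (hres : i ⟨r, by omega⟩ = i ⟨r + 2, h2⟩)
      (hl : i ⟨r, by omega⟩ = i ⟨r + 1, by omega⟩ + 1) :
      DRORel
        (fψ O e n S r (Nat.lt_of_succ_lt h2) * fψ O e n S (r + 1) h2 *
          fψ O e n S r (Nat.lt_of_succ_lt h2) * fe O e n S i hi)
        ((fψ O e n S (r + 1) h2 * fψ O e n S r (Nat.lt_of_succ_lt h2) *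
          fψ O e n S (r + 1) h2 + 1) * fe O e n S i hi)
  | braid_other (r : ℕ) (h2 : r + 2 < n) (hr : 2 ≤ r) (i : nseq e n) (hi : i ∈ S)
      (hno : ¬(i ⟨r, by omega⟩ = i ⟨r + 2, h2⟩ ∧
        (i ⟨r + 1, by omega⟩ = i ⟨r, by omega⟩ + 1 ∨
         i ⟨r, by omega⟩ = i ⟨r + 1, by omega⟩ + 1))) :
      DRORel
        (fψ O e n S r (Nat.lt_of_succ_lt h2) * fψ O e n S (r + 1) h2 *
          fψ O e n S r (Nat.lt_of_succ_lt h2) * fe O e n S i hi)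
        (fψ O e n S (r + 1) h2 * fψ O e n S r (Nat.lt_of_succ_lt h2) *
          fψ O e n S (r + 1) h2 * fe O e n S i hi)

/-- The deformed quiver Hecke algebra `R^O_γ` over `O` (Definition 2.29). -/
abbrev DRO := RingQuot (DRORel O tu e n S)

end DROPresentation

/-! ### Graded cellular basis data (Hu–Mathas `ψ`-basis) -/

/-- The entry of the initial tableau `t^λ` (rows filled left to right, top to bottom). -/
def initEntry (μ : YoungDiagram) (c : ℕ × ℕ) : ℕ :=
  c.2 + 1 + ∑ r ∈ Finset.range c.1, μ.rowLen r

/-- The cell of the initial tableau `t^λ` containing `m`. -/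
noncomputable def initCell (μ : YoungDiagram) (m : ℕ) : ℕ × ℕ :=
  Function.invFunOn (initEntry μ) ↑μ.cells m

/-- `i^λ = res(t^λ)`, the residue sequence of the initial tableau. -/
noncomputable def initResSeq (e n : ℕ) (μ : YoungDiagram) : nseq e n :=
  fun k => ((initCell μ (k.1 + 1)).2 : ZMod e) - ((initCell μ (k.1 + 1)).1 : ZMod e)

/-- The permutation of `ℕ` determined by a word in the simple transpositions
`s_m = (m, m+1)` (1-indexed). -/
def wordPerm (l : List ℕ) : Equiv.Perm ℕ :=
  (l.map (fun m => Equiv.swap m (m + 1))).prod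

/-- `l` is a reduced expression for `w ∈ S_n` in the generators `s_1, …, s_{n-1}`. -/
def IsReducedWord (n : ℕ) (l : List ℕ) (w : Equiv.Perm ℕ) : Prop :=
  (∀ m ∈ l, 1 ≤ m ∧ m < n) ∧ wordPerm l = w ∧
    ∀ l' : List ℕ, wordPerm l' = w → l.length ≤ l'.length

/-- `w = d(s)` is the permutation with `s = w ⬝ t^λ`. -/
def IsDPerm {n : ℕ} (w : Equiv.Perm ℕ) (s : StdTab n) : Prop :=
  ∀ c ∈ s.1.1, s.1.2.entry c = w (initEntry s.1.1 c)

/-- The product `ψ_w` of KLR generators along a word (1-indexed entries). -/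
noncomputable def psiWord (Z : Type*) [CommRing Z] (e n : ℕ) [NeZero e] (l : List ℕ) :
    KLR Z e n Finset.univ :=
  (l.map (fun m =>
    if h : 1 ≤ m ∧ m < n then Ψgen Z e n Finset.univ (m - 1) (by omega) else 1)).prod

/-- The element `y_λ = ∏ y_m`, over `m` whose column in `t^λ` is divisible by `e`. -/
noncomputable def yLambda (Z : Type*) [CommRing Z] (e n : ℕ) [NeZero e] (μ : YoungDiagram) :
    KLR Z e n Finset.univ :=
  ((μ.cells.toList.filter (fun c => (c.2 + 1) % e = 0)).map
    (fun c =>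
      if h : initEntry μ c - 1 < n then Ygen Z e n Finset.univ (initEntry μ c - 1) h
      else 1)).prod

/-- `st` is the homogeneous anti-involution `⋆` of the quiver Hecke algebra fixing the
KLR generators. -/
def KLRStarSpec (Z : Type*) [CommRing Z] (e n : ℕ) [NeZero e]
    (st : KLR Z e n Finset.univ →ₗ[Z] KLR Z e n Finset.univ) : Prop :=
  (∀ x y, st (x * y) = st y * st x) ∧
  (∀ (r : ℕ) (h : r + 1 < n), st (Ψgen Z e n Finset.univ r h) = Ψgen Z e n Finset.univ r h) ∧
  (∀ (s : ℕ) (hs : s < n), st (Ygen Z e n Finset.univ s hs) = Ygen Z e n Finset.univ s hs) ∧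
  (∀ i : nseq e n,
    st (Egen Z e n Finset.univ i (Finset.mem_univ i)) = Egen Z e n Finset.univ i (Finset.mem_univ i))

/-- `x` is the graded cellular basis element
`ψ_{st} = ψ_{d(s)} y_λ e(i^λ) ψ_{d(t)}^⋆` of Hu–Mathas. -/
def IsPsiSt (Z : Type*) [CommRing Z] (e n : ℕ) [NeZero e]
    (st : KLR Z e n Finset.univ →ₗ[Z] KLR Z e n Finset.univ)
    (p : StdPair n) (x : KLR Z e n Finset.univ) : Prop :=
  ∃ (ws wt : Equiv.Perm ℕ) (ls lt : List ℕ),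
    IsDPerm ws p.left ∧ IsDPerm wt p.right ∧
    IsReducedWord n ls ws ∧ IsReducedWord n lt wt ∧
    x = psiWord Z e n ls * yLambda Z e n p.1.1 *
        Egen Z e n Finset.univ (initResSeq e n p.1.1) (Finset.mem_univ _) *
        st (psiWord Z e n lt)

/-- The `(ℤ/2 × ℤ)`-grading on `R_n(S_n)`: `y_s` and `ψ_r e(i)` are odd,
and `ε_a(i) = e(i) + (-1)^a e(-i)` has degree `(a, 0)`. -/
def KLRSuperGradingSpec (Z : Type*) [CommRing Z] (e n : ℕ) [NeZero e]
    (𝒜 : ZMod 2 × ℤ → Submodule Z (KLR Z e n Finset.univ)) : Prop :=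
  (∀ (s : ℕ) (hs : s < n), Ygen Z e n Finset.univ s hs ∈ 𝒜 (1, 2)) ∧
  (∀ (r : ℕ) (h : r + 1 < n) (i : nseq e n),
    Ψgen Z e n Finset.univ r h * Egen Z e n Finset.univ i (Finset.mem_univ i) ∈
      𝒜 (1, - cartan e (i ⟨r, Nat.lt_of_succ_lt h⟩) (i ⟨r + 1, h⟩))) ∧
  (∀ (i : nseq e n) (a : ZMod 2),
    Egen Z e n Finset.univ i (Finset.mem_univ i) +
      (if a = 0 then 1 else -1) * Egen Z e n Finset.univ (-i) (Finset.mem_univ _) ∈ 𝒜 (a, 0))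

/-! The block idempotents `e_γ = ∑_{i ∈ I^γ} e(i)` are orthogonal idempotents summing to `1`;
they are central because `I^γ` is stable under the place permutations by which `ψ_r` moves
the `e(i)`, and `sgn`-fixed because `I^γ` is stable under `i ↦ -i`. So the `sgn`-fixed part of
`R_n(S_n)` splits as the direct sum of the `R_n(A_n)_γ = e_γ R_n(A_n)`, each an ideal.
For the grading: `sgn` sends each homogeneous generator `ψ_r e(i)`, `y_s`, `e(i)` to plus or
minus one of the same degree (`c_{-i,-j} = c_{i,j}`), so it preserves every graded piece;
hence, like multiplication by `e_γ ∈ R_0`, it commutes with taking homogeneous components,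
and `R_n(A_n)_γ` is spanned by its homogeneous elements. -/

theorem _root_.OrthogonalIdempotents.commute {R I : Type*} [Semiring R] {e : I → R}
    (he : OrthogonalIdempotents e) (i j : I) : Commute (e i) (e j) := by
  by_cases hij : i = j
  · rw [hij]
  · exact (he.ortho hij).trans (he.ortho (Ne.symm hij)).symm

theorem _root_.OrthogonalIdempotents.sum_of_pairwise_disjoint {R I J : Type*} [Semiring R]
    {e : I → R} (he : OrthogonalIdempotents e) {s : J → Finset I}
    (hs : Pairwise (Function.onFun Disjoint s)) :
    OrthogonalIdempotents fun j => ∑ i ∈ s j, e i where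
  idem _ := he.isIdempotentElem_sum
  ortho j k hjk := by
    dsimp only
    rw [Finset.sum_mul_sum]
    refine Finset.sum_eq_zero fun a ha => Finset.sum_eq_zero fun b hb => he.ortho ?_
    rintro rfl
    exact Finset.disjoint_left.mp (hs hjk) ha hb

theorem _root_.OrthogonalIdempotents.iSupIndep {R A I : Type*} [CommSemiring R] [Semiring A]
    [Algebra R A] {e : I → A} (he : OrthogonalIdempotents e) {M : I → Submodule R A}
    (hM : ∀ i, ∀ x ∈ M i, e i * x = x) : iSupIndep M := by
  intro i
  have hker : (⨆ j, ⨆ (_ : j ≠ i), M j) ≤ LinearMap.ker (LinearMap.mulLeft R (e i)) :=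
    iSup₂_le fun j hj x hx => by
      rw [LinearMap.mem_ker, LinearMap.mulLeft_apply, ← hM j x hx, ← mul_assoc,
        he.ortho (Ne.symm hj), zero_mul]
  refine Submodule.disjoint_def.mpr fun x hx hx' => ?_
  rw [← hM i x hx]
  exact hker hx'

theorem _root_.RingQuot.adjoin_range_mkAlgHom_ι {R X : Type*} [CommSemiring R]
    (r : FreeAlgebra R X → FreeAlgebra R X → Prop) :
    Algebra.adjoin R (Set.range fun x => RingQuot.mkAlgHom R r (FreeAlgebra.ι R x)) = ⊤ := by
  rw [Set.range_comp' (RingQuot.mkAlgHom R r), Algebra.adjoin_image, FreeAlgebra.adjoin_range_ι,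
    Algebra.map_top, AlgHom.range_eq_top]
  exact RingQuot.mkAlgHom_surjective R r

section Graded

open DirectSum

variable {ι R M : Type*} [DecidableEq ι] [Semiring R] [AddCommMonoid M] [Module R M]
  {𝒜 : ι → Submodule R M} [Decomposition 𝒜]

theorem _root_.Submodule.IsHomogeneous.le_span_homogeneous {p : Submodule R M}
    (hp : p.IsHomogeneous 𝒜) :
    p ≤ Submodule.span R {x | x ∈ p ∧ SetLike.IsHomogeneousElem 𝒜 x} := by
  classical
  intro x hx
  rw [← sum_support_decompose 𝒜 x]
  exact sum_mem fun i _ => Submodule.subset_span ⟨hp i hx, i, (decompose 𝒜 x i).2⟩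

theorem _root_.Submodule.le_comap_of_iSup_inf_comap_eq_top {f : M →ₗ[R] M}
    (h : ⨆ i, 𝒜 i ⊓ (𝒜 i).comap f = ⊤) (i : ι) : 𝒜 i ≤ (𝒜 i).comap f := by
  have key : ∀ x : M, ∀ j, f (decompose 𝒜 x j) ∈ 𝒜 j := by
    intro x
    refine Submodule.iSup_induction _ (motive := fun x => ∀ j, f (decompose 𝒜 x j) ∈ 𝒜 j)
      (h ▸ Submodule.mem_top : x ∈ ⨆ i, 𝒜 i ⊓ (𝒜 i).comap f) ?_ ?_ ?_
    · intro k y hy j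
      by_cases hkj : k = j
      · subst hkj
        rw [decompose_of_mem_same 𝒜 hy.1]
        exact hy.2
      · rw [decompose_of_mem_ne 𝒜 hy.1 hkj, map_zero]
        exact zero_mem _
    · simp
    · intro y z hy hz j
      rw [decompose_add, DirectSum.add_apply, Submodule.coe_add, map_add]
      exact add_mem (hy j) (hz j)
  intro x hx
  simpa [decompose_of_mem_same 𝒜 hx] using key x i

theorem _root_.DirectSum.coe_decompose_map_of_le_comap {f : M →ₗ[R] M}
    (hf : ∀ i, 𝒜 i ≤ (𝒜 i).comap f) (x : M) (i : ι) :
    (decompose 𝒜 (f x) i : M) = f (decompose 𝒜 x i) := by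
  induction x using Decomposition.inductionOn 𝒜 with
  | zero => simp
  | @homogeneous j m =>
    by_cases hji : j = i
    · subst hji
      rw [decompose_of_mem_same 𝒜 (hf j m.2), decompose_coe, of_eq_same]
    · rw [decompose_of_mem_ne 𝒜 (hf j m.2) hji, decompose_coe, of_eq_of_ne _ _ _ (Ne.symm hji),
        Submodule.coe_zero, map_zero]
  | add x y hx hy => rw [map_add, decompose_add, DirectSum.add_apply, Submodule.coe_add, hx, hy,
      decompose_add, DirectSum.add_apply, Submodule.coe_add, map_add]

end Graded

section GradedAlgebra

variable {ι R A : Type*} [DecidableEq ι] [AddMonoid ι] [CommSemiring R] [Semiring A]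
  [Algebra R A] (𝒜 : ι → Submodule R A) [GradedAlgebra 𝒜] (f : A →ₐ[R] A)

theorem _root_.GradedAlgebra.iSup_inf_comap_mul_le :
    (⨆ i, 𝒜 i ⊓ (𝒜 i).comap f.toLinearMap) * (⨆ i, 𝒜 i ⊓ (𝒜 i).comap f.toLinearMap) ≤
      ⨆ i, 𝒜 i ⊓ (𝒜 i).comap f.toLinearMap := by
  rw [Submodule.iSup_mul]
  refine iSup_le fun i => ?_
  rw [Submodule.mul_iSup]
  refine iSup_le fun j => Submodule.mul_le.mpr fun x hx y hy => ?_
  have hxy : f (x * y) ∈ 𝒜 (i + j) := by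
    rw [map_mul]
    exact SetLike.mul_mem_graded (hx.2 : f x ∈ 𝒜 i) (hy.2 : f y ∈ 𝒜 j)
  exact Submodule.mem_iSup_of_mem (i + j)
    (Submodule.mem_inf.mpr ⟨SetLike.mul_mem_graded hx.1 hy.1, hxy⟩)

theorem _root_.GradedAlgebra.le_comap_of_adjoin_eq_top {s : Set A} (hs : Algebra.adjoin R s = ⊤)
    (hf : ∀ x ∈ s, x ∈ ⨆ i, 𝒜 i ⊓ (𝒜 i).comap f.toLinearMap) (i : ι) :
    𝒜 i ≤ (𝒜 i).comap f.toLinearMap := by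
  let T := (⨆ i, 𝒜 i ⊓ (𝒜 i).comap f.toLinearMap).toSubalgebra
    (Submodule.mem_iSup_of_mem 0
      ⟨SetLike.one_mem_graded 𝒜, by simpa using SetLike.one_mem_graded 𝒜⟩)
    (fun _ _ hx hy => GradedAlgebra.iSup_inf_comap_mul_le 𝒜 f (Submodule.mul_mem_mul hx hy))
  have hT : T = ⊤ := top_le_iff.mp (hs ▸ Algebra.adjoin_le hf)
  refine Submodule.le_comap_of_iSup_inf_comap_eq_top (eq_top_iff.mpr fun x _ => ?_) i
  exact (hT ▸ Algebra.mem_top : x ∈ T)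

end GradedAlgebra

section Generators

variable {Z : Type*} [CommRing Z] {e n : ℕ} {S : Finset (nseq e n)}

theorem KLR.subalgebra_eq_top {T : Subalgebra Z (KLR Z e n S)}
    (hψ : ∀ r (h : r + 1 < n), Ψgen Z e n S r h ∈ T)
    (hy : ∀ s (hs : s < n), Ygen Z e n S s hs ∈ T)
    (hE : ∀ i (hi : i ∈ S), Egen Z e n S i hi ∈ T) : T = ⊤ := by
  refine top_le_iff.mp ((RingQuot.adjoin_range_mkAlgHom_ι (KLRRel Z e n S)).symm.trans_le
    (Algebra.adjoin_le ?_))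
  rintro _ ⟨g, rfl⟩
  cases g with
  | psi r h => exact hψ r h
  | y s hs => exact hy s hs
  | idem i hi => exact hE i hi

theorem Egen_mul_Egen (i j : nseq e n) (hi : i ∈ S) (hj : j ∈ S) :
    Egen Z e n S i hi * Egen Z e n S j hj = if i = j then Egen Z e n S i hi else 0 := by
  have h := RingQuot.mkAlgHom_rel Z (KLRRel.idem_mul (Z := Z) i j hi hj)
  rw [map_mul, apply_ite (RingQuot.mkAlgHom Z _), map_zero] at h
  exact h

theorem sum_attach_Egen : ∑ i ∈ S.attach, Egen Z e n S i.1 i.2 = 1 := by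
  have h := RingQuot.mkAlgHom_rel Z (KLRRel.idem_sum (Z := Z) (S := S))
  rwa [map_sum, map_one] at h

theorem Ψgen_mul_Egen (r : ℕ) (h : r + 1 < n) (i : nseq e n) (hi : i ∈ S)
    (hsi : swapSeq r h i ∈ S) :
    Ψgen Z e n S r h * Egen Z e n S i hi =
      Egen Z e n S (swapSeq r h i) hsi * Ψgen Z e n S r h := by
  have hrel := RingQuot.mkAlgHom_rel Z (KLRRel.psi_idem (Z := Z) r h i hi hsi)
  rwa [map_mul, map_mul] at hrel

theorem Ygen_mul_Egen (s : ℕ) (hs : s < n) (i : nseq e n) (hi : i ∈ S) :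
    Ygen Z e n S s hs * Egen Z e n S i hi = Egen Z e n S i hi * Ygen Z e n S s hs := by
  have hrel := RingQuot.mkAlgHom_rel Z (KLRRel.y_idem (Z := Z) s hs i hi)
  rwa [map_mul, map_mul] at hrel

end Generators

theorem swapSeq_involutive {e n : ℕ} (r : ℕ) (h : r + 1 < n) :
    Function.Involutive (swapSeq (e := e) r h) := by
  intro i
  funext k
  simp [swapSeq]

theorem cartan_neg_neg (e : ℕ) (a b : ZMod e) : cartan e (-a) (-b) = cartan e a b := by
  have key : ∀ x y : ZMod e, -x = -y + 1 ↔ y = x + 1 := fun x y => by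
    constructor <;> intro h <;> linear_combination h
  simp only [cartan, neg_inj, key, or_comm]

section Blocks

variable {e n : ℕ}

theorem mult_comp_perm (i : nseq e n) (σ : Equiv.Perm (Fin n)) : mult (i ∘ σ) = mult i := by
  rw [mult, mult, ← Multiset.map_map, Multiset.map_univ_val_equiv]

theorem gammaOf_swapSeq (r : ℕ) (h : r + 1 < n) (i : nseq e n) :
    gammaOf (swapSeq r h i) = gammaOf i :=
  Quotient.sound (Or.inl (mult_comp_perm i _))

theorem gammaOf_neg (i : nseq e n) : gammaOf (-i) = gammaOf i :=
  Quotient.sound (Or.inr (by rw [mult, mult, Multiset.map_map]; rfl))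

theorem mem_Iγ [NeZero e] {γ : Qtilde e n} {i : nseq e n} : i ∈ Iγ e n γ ↔ gammaOf i = γ := by
  simp [Iγ]

end Blocks

section BlockIdempotents

variable (Z : Type*) [CommRing Z] {e n : ℕ} [NeZero e]

theorem egam_eq_sum (γ : Qtilde e n) :
    egam Z e n γ = ∑ i ∈ Iγ e n γ, Egen Z e n Finset.univ i (Finset.mem_univ i) :=
  Finset.sum_attach _ fun i => Egen Z e n Finset.univ i (Finset.mem_univ i)

theorem orthogonalIdempotents_Egen :
    OrthogonalIdempotents fun i : nseq e n => Egen Z e n Finset.univ i (Finset.mem_univ i) :=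
  OrthogonalIdempotents.iff_mul_eq.mpr fun i j => Egen_mul_Egen i j _ _

theorem orthogonalIdempotents_egam : OrthogonalIdempotents (egam Z e n) := by
  rw [show egam Z e n = _ from funext (egam_eq_sum Z)]
  refine (orthogonalIdempotents_Egen Z).sum_of_pairwise_disjoint fun γ γ' hγ => ?_
  exact Finset.disjoint_left.mpr fun i hi hi' => hγ ((mem_Iγ.mp hi).symm.trans (mem_Iγ.mp hi'))

theorem sum_image_gammaOf_egam [DecidableEq (Qtilde e n)] :
    ∑ γ ∈ Finset.univ.image gammaOf, egam Z e n γ = (1 : KLR Z e n Finset.univ) := by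
  rw [← sum_attach_Egen, Finset.sum_attach Finset.univ
    (fun i => Egen Z e n Finset.univ i (Finset.mem_univ i)),
    ← Finset.sum_fiberwise_of_maps_to fun i _ =>
      Finset.mem_image_of_mem gammaOf (Finset.mem_univ i)]
  refine Finset.sum_congr rfl fun γ _ => ?_
  rw [egam_eq_sum]
  exact Finset.sum_congr (Finset.ext fun i => by simp [mem_Iγ]) fun _ _ => rfl

theorem sum_Iγ_Egen_equiv (σ : nseq e n ≃ nseq e n) (hσ : ∀ i, gammaOf (σ i) = gammaOf i)
    (γ : Qtilde e n) :
    ∑ i ∈ Iγ e n γ, Egen Z e n Finset.univ (σ i) (Finset.mem_univ _) = egam Z e n γ := by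
  rw [egam_eq_sum]
  exact Finset.sum_equiv σ (fun i => by simp only [mem_Iγ, hσ]) fun _ _ => rfl

theorem sgn_egam {sgn : KLR Z e n Finset.univ ≃ₐ[Z] KLR Z e n Finset.univ}
    (hsgn : SgnSpec Z e n Finset.univ sgn) (γ : Qtilde e n) :
    sgn (egam Z e n γ) = egam Z e n γ := by
  conv_lhs => rw [egam_eq_sum, map_sum]
  rw [← sum_Iγ_Egen_equiv Z (Equiv.neg _) gammaOf_neg]
  exact Finset.sum_congr rfl fun i _ => hsgn.2.2 i _ _

theorem commute_egam_Ψgen (γ : Qtilde e n) (r : ℕ) (h : r + 1 < n) :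
    Commute (egam Z e n γ) (Ψgen Z e n Finset.univ r h) := by
  let σ := (swapSeq_involutive (e := e) r h).toPerm
  calc egam Z e n γ * Ψgen Z e n Finset.univ r h
      = (∑ i ∈ Iγ e n γ, Egen Z e n Finset.univ (σ i) (Finset.mem_univ _)) *
          Ψgen Z e n Finset.univ r h := by
        rw [sum_Iγ_Egen_equiv Z σ (gammaOf_swapSeq r h)]
    _ = ∑ i ∈ Iγ e n γ,
          Ψgen Z e n Finset.univ r h * Egen Z e n Finset.univ i (Finset.mem_univ _) := by
        rw [Finset.sum_mul]
        exact Finset.sum_congr rfl fun i _ => (Ψgen_mul_Egen r h i _ _).symm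
    _ = Ψgen Z e n Finset.univ r h * egam Z e n γ := by rw [← Finset.mul_sum, egam_eq_sum]

theorem commute_egam (γ : Qtilde e n) (x : KLR Z e n Finset.univ) :
    Commute (egam Z e n γ) x := by
  suffices h : Subalgebra.centralizer Z {egam Z e n γ} = ⊤ by
    have hx : x ∈ Subalgebra.centralizer Z {egam Z e n γ} := h ▸ Algebra.mem_top
    exact (Subalgebra.mem_centralizer_iff Z).mp hx _ rfl
  refine KLR.subalgebra_eq_top (fun r h => ?_) (fun s hs => ?_) (fun i _ => ?_) <;>
    refine (Subalgebra.mem_centralizer_iff Z).mpr ?_ <;> rintro _ rfl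
  · exact commute_egam_Ψgen Z γ r h
  · rw [egam_eq_sum]
    exact Commute.sum_left _ _ _ fun j _ => (Ygen_mul_Egen s hs j _).symm
  · rw [egam_eq_sum]
    exact Commute.sum_left _ _ _ fun j _ => (orthogonalIdempotents_Egen Z).commute j i

end BlockIdempotents

section AlternatingBlocks

variable (Z : Type*) [CommRing Z] {e n : ℕ} [NeZero e]
  {sgn : KLR Z e n Finset.univ ≃ₐ[Z] KLR Z e n Finset.univ}

theorem mul_mem_RAnGammaSub_of_fixed {γ : Qtilde e n} {x y : KLR Z e n Finset.univ}
    (hx : x ∈ RAnGammaSub Z e n sgn γ) (hy : sgn y = y) : x * y ∈ RAnGammaSub Z e n sgn γ := by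
  obtain ⟨hx₁, hx₂, hx₃⟩ := hx
  refine ⟨by rw [map_mul, hx₁, hy], by rw [← mul_assoc, hx₂], ?_⟩
  rw [mul_assoc, ← (commute_egam Z γ y).eq, ← mul_assoc, hx₃]

theorem fixed_mul_mem_RAnGammaSub {γ : Qtilde e n} {x y : KLR Z e n Finset.univ}
    (hx : x ∈ RAnGammaSub Z e n sgn γ) (hy : sgn y = y) : y * x ∈ RAnGammaSub Z e n sgn γ := by
  obtain ⟨hx₁, hx₂, hx₃⟩ := hx
  refine ⟨by rw [map_mul, hx₁, hy], ?_, by rw [mul_assoc, hx₃]⟩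
  rw [← mul_assoc, (commute_egam Z γ y).eq, mul_assoc, hx₂]

theorem iSupIndep_RAnGammaSub : iSupIndep (RAnGammaSub Z e n sgn) :=
  (orthogonalIdempotents_egam Z).iSupIndep fun _ _ hx => hx.2.1

theorem iSup_RAnGammaSub (hsgn : SgnSpec Z e n Finset.univ sgn) :
    ⨆ γ, RAnGammaSub Z e n sgn γ = Subalgebra.toSubmodule (fixedSubalgebra Z sgn.toAlgHom) := by
  classical
  refine le_antisymm (iSup_le fun γ x hx => hx.1) fun x (hx : sgn x = x) => ?_
  rw [← one_mul x, ← sum_image_gammaOf_egam Z, Finset.sum_mul]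
  refine Submodule.sum_mem _ fun γ _ => Submodule.mem_iSup_of_mem γ ?_
  have hidem := ((orthogonalIdempotents_egam Z).idem γ).eq
  exact mul_mem_RAnGammaSub_of_fixed Z ⟨sgn_egam Z hsgn γ, hidem, hidem⟩ hx

section Grading

variable {𝒜 : ℤ → Submodule Z (KLR Z e n Finset.univ)} [GradedAlgebra 𝒜]

theorem grade_le_comap_sgn (h𝒜 : KLRGradingSpec Z e n Finset.univ 𝒜)
    (hsgn : SgnSpec Z e n Finset.univ sgn) (d : ℤ) :
    𝒜 d ≤ (𝒜 d).comap sgn.toAlgHom.toLinearMap := by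
  have hmem : ∀ d x, x ∈ 𝒜 d → sgn x ∈ 𝒜 d →
      x ∈ ⨆ d, 𝒜 d ⊓ (𝒜 d).comap sgn.toAlgHom.toLinearMap :=
    fun d x hx hsx => Submodule.mem_iSup_of_mem d (Submodule.mem_inf.mpr ⟨hx, hsx⟩)
  refine GradedAlgebra.le_comap_of_adjoin_eq_top 𝒜 _
    (RingQuot.adjoin_range_mkAlgHom_ι (KLRRel Z e n Finset.univ)) ?_ d
  rintro _ ⟨g, rfl⟩
  cases g with
  | psi r h =>
    change Ψgen Z e n Finset.univ r h ∈ _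
    -- `ψ_r` itself is not homogeneous, but each `ψ_r e(i)` is
    rw [← mul_one (Ψgen Z e n Finset.univ r h), ← sum_attach_Egen, Finset.mul_sum]
    refine Submodule.sum_mem _ fun i _ => hmem _ _ (h𝒜.2.2 r h i i.2) ?_
    rw [map_mul, hsgn.1, hsgn.2.2 _ _ (Finset.mem_univ _),
      neg_mul (Ψgen Z e n Finset.univ r h)]
    have hneg := Submodule.neg_mem _ (h𝒜.2.2 r h (-i) (Finset.mem_univ _))
    simpa only [Pi.neg_apply, cartan_neg_neg] using hneg
  | y s hs =>
    refine hmem 2 _ (h𝒜.2.1 s hs) ?_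
    exact (hsgn.2.1 s hs).symm ▸ Submodule.neg_mem _ (h𝒜.2.1 s hs)
  | idem i hi =>
    refine hmem 0 _ (h𝒜.1 i hi) ?_
    exact (hsgn.2.2 i hi (Finset.mem_univ _)).symm ▸ h𝒜.1 (-i) (Finset.mem_univ _)

theorem RAnGammaSub_isHomogeneous (h𝒜 : KLRGradingSpec Z e n Finset.univ 𝒜)
    (hsgn : SgnSpec Z e n Finset.univ sgn) (γ : Qtilde e n) :
    (RAnGammaSub Z e n sgn γ).IsHomogeneous 𝒜 := by
  intro d x ⟨hx₁, hx₂, hx₃⟩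
  have hegam : egam Z e n γ ∈ 𝒜 0 := by
    rw [egam_eq_sum]
    exact Submodule.sum_mem _ fun i _ => h𝒜.1 i _
  refine ⟨?_, ?_, ?_⟩
  · simpa [hx₁] using
      (DirectSum.coe_decompose_map_of_le_comap (grade_le_comap_sgn Z h𝒜 hsgn) x d).symm
  · rw [← DirectSum.coe_decompose_mul_of_left_mem_zero 𝒜 hegam, hx₂]
  · rw [← DirectSum.coe_decompose_mul_of_right_mem_zero 𝒜 hegam, hx₃]

end Grading

end AlternatingBlocks

theorem alternating_quiver_hecke_block_decomposition_general
    (Z : Type*) [CommRing Z] (e n : ℕ) [NeZero e]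
    (sgn : KLR Z e n Finset.univ ≃ₐ[Z] KLR Z e n Finset.univ)
    (hsgn : SgnSpec Z e n Finset.univ sgn) :
    (∀ γ : Qtilde e n, ∀ x ∈ RAnGammaSub Z e n sgn γ,
      ∀ y : KLR Z e n Finset.univ, sgn y = y →
        x * y ∈ RAnGammaSub Z e n sgn γ ∧ y * x ∈ RAnGammaSub Z e n sgn γ) ∧
    iSupIndep (RAnGammaSub Z e n sgn) ∧
    (⨆ γ : Qtilde e n, RAnGammaSub Z e n sgn γ) =
      Subalgebra.toSubmodule (fixedSubalgebra Z sgn.toAlgHom) ∧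
    (∀ 𝒜 : ℤ → Submodule Z (KLR Z e n Finset.univ),
      Nonempty (GradedAlgebra 𝒜) → KLRGradingSpec Z e n Finset.univ 𝒜 →
      ∀ γ : Qtilde e n,
        RAnGammaSub Z e n sgn γ ≤ Submodule.span Z
          {y | y ∈ RAnGammaSub Z e n sgn γ ∧ ∃ d : ℤ, y ∈ 𝒜 d}) := by
  refine ⟨fun γ x hx y hy => ⟨mul_mem_RAnGammaSub_of_fixed Z hx hy,
    fixed_mul_mem_RAnGammaSub Z hx hy⟩, iSupIndep_RAnGammaSub Z, iSup_RAnGammaSub Z hsgn, ?_⟩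
  rintro 𝒜 ⟨_⟩ h𝒜 γ
  exact (RAnGammaSub_isHomogeneous Z h𝒜 hsgn γ).le_span_homogeneous

/-- As a graded algebra, `R_n(A_n) = ⊕_{γ ∈ Q̃⁺_n} R_n(A_n)_γ` is a direct sum of
two-sided `ℤ`-graded ideals, where `R_n(A_n)_γ` consists of the `sgn`-fixed elements of
the block `R_γ = e_γ R_n(S_n)`. -/
theorem alternating_quiver_hecke_block_decomposition
    (Z : Type*) [CommRing Z] (e n : ℕ) [NeZero e] (he : 2 < e)
    (sgn : KLR Z e n Finset.univ ≃ₐ[Z] KLR Z e n Finset.univ)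
    (hsgn : SgnSpec Z e n Finset.univ sgn) :
    (∀ γ : Qtilde e n, ∀ x ∈ RAnGammaSub Z e n sgn γ,
      ∀ y : KLR Z e n Finset.univ, sgn y = y →
        x * y ∈ RAnGammaSub Z e n sgn γ ∧ y * x ∈ RAnGammaSub Z e n sgn γ) ∧
    iSupIndep (RAnGammaSub Z e n sgn) ∧
    (⨆ γ : Qtilde e n, RAnGammaSub Z e n sgn γ) =
      Subalgebra.toSubmodule (fixedSubalgebra Z sgn.toAlgHom) ∧
    (∀ 𝒜 : ℤ → Submodule Z (KLR Z e n Finset.univ),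
      Nonempty (GradedAlgebra 𝒜) → KLRGradingSpec Z e n Finset.univ 𝒜 →
      ∀ γ : Qtilde e n,
        RAnGammaSub Z e n sgn γ ≤ Submodule.span Z
          {y | y ∈ RAnGammaSub Z e n sgn γ ∧ ∃ d : ℤ, y ∈ 𝒜 d}) :=
  alternating_quiver_hecke_block_decomposition_general Z e n sgn hsgn

end QH
end

section
/- Let (O, t) be an e-idempotent subring. For γ ∈ Q̃⁺_n set f_γ^O = Σ_{i∈I^γ} f_i^O. Then f_γ^O is a central idempotent of H^O = H_t^O(S_n), and H^O = ⊕_{γ∈Q̃⁺_n} H^O_γ where H^O_γ = H^O f_γ^O. -/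
open scoped BigOperators

namespace QH


variable (Z : Type*) [CommRing Z] (e n : ℕ) (S : Finset (nseq e n))

/-!
The seminormal basis diagonalises the Jucys–Murphy elements, and `F_s = γ_s⁻¹ f_{ss}` acts on
`f_{uv}` by `δ_{su}` from the left and by `δ_{vs}` from the right. Hence `f_γ` acts on `f_{uv}`,
from either side, as `1` or `0` according as the residue sequence of `u` lies in `I^γ` or not
(`u` and `v` have the same shape, hence the same residue content). Idempotency, orthogonality,
centrality and `∑ f_γ = 1` can therefore all be checked on the basis.

For integrality, the product `X` of the `L_{k+1} - [c]` over the contents `c` with `c ≢ i_k`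
acts on `f_{uv}` by a scalar which vanishes unless `u ∈ Std(i)`, and is then a unit of `O`: each
factor is `[a] - [c] = t^c [a - c]` with `e ∤ a - c`. Hence `f_i = 1 - ∏_{s ∈ Std(i)} (1 - λ_s⁻¹ X)`,
where `λ_s` is the scalar by which `X` acts on `f_{st}`, and this lies in `H^O`.
-/

theorem Subring.zpow_mem_of_inv_mem {K : Type*} [DivisionRing K] {O : Subring K} {x : K}
    (hx : x ∈ O) (hx' : x⁻¹ ∈ O) : ∀ z : ℤ, x ^ z ∈ O
  | .ofNat m => by simpa using pow_mem hx m
  | .negSucc m => by simpa [zpow_negSucc] using pow_mem hx' (m + 1)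

theorem YoungDiagram.lt_card_of_mem {μ : YoungDiagram} {c : ℕ × ℕ} (hc : c ∈ μ) :
    c.1 < μ.card ∧ c.2 < μ.card := by
  have hsub : Finset.range (c.1 + 1) ×ˢ Finset.range (c.2 + 1) ⊆ μ.cells := by
    intro x hx
    simp only [Finset.mem_product, Finset.mem_range] at hx
    exact μ.up_left_mem (Nat.lt_succ_iff.mp hx.1) (Nat.lt_succ_iff.mp hx.2) hc
  have hcard : (c.1 + 1) * (c.2 + 1) ≤ μ.card := by simpa using Finset.card_le_card hsub
  constructor <;> nlinarith

section SpanningFamily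

variable {R A P : Type*} [CommSemiring R] [Semiring A] [Algebra R A] {b : P → A}

theorem list_prod_mul_eq_smul {ι : Type*} (l : List ι) (x : ι → A) (c : ι → R) {v : A}
    (h : ∀ i ∈ l, x i * v = c i • v) : (l.map x).prod * v = (l.map c).prod • v := by
  induction l with
  | nil => simp
  | cons i l ih =>
    simp only [List.map_cons, List.prod_cons, List.forall_mem_cons] at h ⊢
    rw [mul_assoc, ih h.2, mul_smul_comm, h.1, smul_smul, mul_comm]

variable (hb : Submodule.span R (Set.range b) = ⊤)
include hb

theorem eq_of_mul_eq_mul_of_span_eq_top {x y : A} (h : ∀ p, x * b p = y * b p) :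
    x = y := by
  simpa using LinearMap.congr_fun
    (LinearMap.ext_on_range hb (f := LinearMap.mulLeft R x) (g := LinearMap.mulLeft R y) h) 1

theorem commute_of_mul_eq_mul_of_span_eq_top {x : A} (h : ∀ p, x * b p = b p * x) (y : A) :
    Commute x y :=
  LinearMap.congr_fun
    (LinearMap.ext_on_range hb (f := LinearMap.mulLeft R x) (g := LinearMap.mulRight R x) h) y

variable {G : Type*} [DecidableEq G] {lab : P → G} {E : G → A}
  (hE : ∀ g p, E g * b p = if lab p = g then b p else 0)
include hE

theorem mul_self_of_mul_eq_ite (g : G) : E g * E g = E g :=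
  eq_of_mul_eq_mul_of_span_eq_top hb fun p => by
    by_cases hp : lab p = g <;> simp [mul_assoc, hE, hp]

theorem mul_eq_zero_of_mul_eq_ite {g g' : G} (hne : g ≠ g') : E g * E g' = 0 :=
  eq_of_mul_eq_mul_of_span_eq_top hb fun p => by
    by_cases hp : lab p = g' <;> simp [mul_assoc, hE, hp, hne.symm]

theorem finsum_eq_one_of_mul_eq_ite [Finite G] : ∑ᶠ g, E g = 1 :=
  eq_of_mul_eq_mul_of_span_eq_top hb fun p => by
    rw [finsum_mul' E (b p) (Set.toFinite _), one_mul, finsum_congr fun g => hE g p,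
      finsum_eq_single _ (lab p) fun g hg => if_neg (Ne.symm hg), if_pos rfl]

theorem commute_of_mul_eq_ite (hE' : ∀ g p, b p * E g = if lab p = g then b p else 0)
    (g : G) (y : A) : Commute (E g) y :=
  commute_of_mul_eq_mul_of_span_eq_top hb (fun p => by rw [hE, hE']) y

end SpanningFamily

section Separation

variable {K A P T : Type*} [Field K] [Ring A] [Algebra K A] [DecidableEq T] {b : P → A}
  {O : Subring K} {S : Subring A}

/-- `E` is the element `1 - ∏_{s ∈ U} (1 - λ_s⁻¹ X)` of `S`. -/
theorem mem_of_mul_eq_ite_of_eigenvalue (hb : Submodule.span K (Set.range b) = ⊤)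
    (hS : ∀ x ∈ O, algebraMap K A x ∈ S) {κ : P → T} {U : Finset T} {lam : T → K} {X : A}
    (hX : X ∈ S) (hXb : ∀ p, X * b p = lam (κ p) • b p) (hlam : ∀ s ∉ U, lam s = 0)
    (hlamU : ∀ s ∈ U, lam s ∈ O.toSubmonoid.leftInv) {E : A}
    (hE : ∀ p, E * b p = if κ p ∈ U then b p else 0) : E ∈ S := by
  choose! w hw using fun s hs => (hlamU s hs : ∃ y : O.toSubmonoid, lam s * y = 1)
  have hfactor (s : T) : 1 - (w s : K) • X ∈ S := by
    rw [Algebra.smul_def]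
    exact sub_mem (one_mem _) (mul_mem (hS _ (w s).2) hX)
  suffices E = 1 - (U.toList.map fun s => 1 - (w s : K) • X).prod by
    rw [this]
    exact sub_mem (one_mem _) (list_prod_mem (by simpa using fun s _ => hfactor s))
  refine eq_of_mul_eq_mul_of_span_eq_top hb fun p => ?_
  rw [hE, sub_mul, one_mul, list_prod_mul_eq_smul _ _ (fun s => 1 - (w s : K) * lam (κ p))
    fun s _ => by rw [sub_mul, one_mul, smul_mul_assoc, hXb, smul_smul, sub_smul, one_smul]]
  split_ifs with hp
  · rw [List.prod_eq_zero (List.mem_map.mpr ⟨κ p, Finset.mem_toList.mpr hp,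
      by rw [mul_comm, hw _ hp, sub_self]⟩), zero_smul, sub_zero]
  · rw [List.prod_eq_one fun x hx => ?_, one_smul, sub_self]
    obtain ⟨s, -, rfl⟩ := List.mem_map.mp hx
    rw [hlam _ hp, mul_zero, sub_zero]

end Separation

section QuantumIntegers

variable {K : Type*} [Field K] {t : K}

theorem qint_natCast (m : ℕ) : qint t m = ∑ j ∈ Finset.range m, t ^ (j : ℤ) := by
  simp [qint]

theorem qint_neg_natCast (m : ℕ) : qint t (-m) = -∑ j ∈ Finset.range m, t ^ (-(j : ℤ) - 1) := by
  rcases m.eq_zero_or_pos with rfl | hm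
  · simp [qint]
  · simp [qint, hm.ne']

theorem qint_succ (k : ℤ) : qint t (k + 1) = qint t k + t ^ k := by
  cases k with
  | ofNat m =>
    simp only [Int.ofNat_eq_natCast, ← Nat.cast_succ, qint_natCast, Finset.sum_range_succ]
  | negSucc m =>
    rw [show Int.negSucc m + 1 = -(m : ℤ) by omega, Int.negSucc_eq, ← Nat.cast_succ,
      qint_neg_natCast, qint_neg_natCast, Finset.sum_range_succ, Nat.cast_succ,
      show -(m : ℤ) - 1 = -(m + 1) by ring]
    ring

theorem qint_add (ht : t ≠ 0) (a b : ℤ) : qint t (a + b) = qint t a + t ^ a * qint t b := by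
  induction b using Int.induction_on with
  | zero => simp [qint]
  | succ b ih => rw [← add_assoc, qint_succ, ih, qint_succ, zpow_add₀ ht]; ring
  | pred b ih =>
    have h₁ := qint_succ (t := t) (a + (-(b : ℤ) - 1))
    have h₂ := qint_succ (t := t) (-(b : ℤ) - 1)
    rw [show a + (-(b : ℤ) - 1) + 1 = a + -b by ring, zpow_add₀ ht] at h₁
    rw [show -(b : ℤ) - 1 + 1 = -b by ring] at h₂
    linear_combination ih - h₁ + t ^ a * h₂

theorem qint_sub_qint (ht : t ≠ 0) (a c : ℤ) :
    qint t a - qint t c = t ^ c * qint t (a - c) := by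
  rw [sub_eq_iff_eq_add', ← qint_add ht, add_sub_cancel]

end QuantumIntegers

namespace IsIdemSubring

variable {K : Type*} [Field K] {O : Subring K} {t : K} {e n : ℕ}

theorem inv_mem (hO : IsIdemSubring K O t e n) : t⁻¹ ∈ O := by
  obtain ⟨u, hu, htu⟩ := hO.t_unit
  rwa [inv_eq_of_mul_eq_one_right htu]

theorem zpow_mem (hO : IsIdemSubring K O t e n) (z : ℤ) : t ^ z ∈ O :=
  Subring.zpow_mem_of_inv_mem hO.t_mem hO.inv_mem z

theorem qint_sub_qint_mem_leftInv (ht : t ≠ 0) (hO : IsIdemSubring K O t e n) {a c : ℤ}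
    (hac : (a : ZMod e) ≠ c) : qint t a - qint t c ∈ O.toSubmonoid.leftInv := by
  have hdvd : ¬ (e : ℤ) ∣ a - c := by
    rwa [← ZMod.intCast_zmod_eq_zero_iff_dvd, Int.cast_sub, sub_eq_zero]
  obtain ⟨v, hv, hqv⟩ := hO.qint_unit (a - c) hdvd
  refine ⟨⟨t ^ (-c) * v, mul_mem (hO.zpow_mem _) hv⟩, ?_⟩
  change (qint t a - qint t c) * (t ^ (-c) * v) = 1
  rw [qint_sub_qint ht, mul_mul_mul_comm, ← zpow_add₀ ht, add_neg_cancel, zpow_zero, one_mul, hqv]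

end IsIdemSubring

namespace StdTableau

variable {μ : YoungDiagram} (T : StdTableau μ)

theorem entry_le_card (c : ℕ × ℕ) : T.entry c ≤ μ.card := by
  by_cases hc : c ∈ μ
  · exact (Finset.mem_Icc.mp (T.mem_entry c hc)).2
  · simp [T.zero_off c hc]

theorem entry_ne_zero_iff {c : ℕ × ℕ} : T.entry c ≠ 0 ↔ c ∈ μ :=
  ⟨fun h => by_contra (h ∘ T.zero_off c),
    fun hc => Nat.one_le_iff_ne_zero.mp (Finset.mem_Icc.mp (T.mem_entry c hc)).1⟩

theorem cellOf_spec {m : ℕ} (h1 : 1 ≤ m) (h2 : m ≤ μ.card) :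
    T.cellOf m ∈ μ ∧ T.entry (T.cellOf m) = m := by
  obtain ⟨c, hc, hcm⟩ := T.surjOn m (Finset.mem_Icc.mpr ⟨h1, h2⟩)
  have hex : ∃ a ∈ (μ.cells : Set (ℕ × ℕ)), T.entry a = m := ⟨c, hc, hcm⟩
  exact ⟨Function.invFunOn_mem hex, Function.invFunOn_eq hex⟩

end StdTableau

namespace StdTab

variable {n : ℕ}

theorem ext_entry {s u : StdTab n} (h : s.1.2.entry = u.1.2.entry) : s = u := by
  obtain ⟨⟨μ, T⟩, hs⟩ := s
  obtain ⟨⟨ν, U⟩, hu⟩ := u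
  obtain rfl : μ = ν := YoungDiagram.ext <| Finset.ext fun c => by
    rw [YoungDiagram.mem_cells, YoungDiagram.mem_cells, ← T.entry_ne_zero_iff,
      ← U.entry_ne_zero_iff, h]
  obtain rfl : T = U := by cases T; cases U; simp_all
  rfl

theorem entry_le (s : StdTab n) (c : ℕ × ℕ) : s.1.2.entry c ≤ n :=
  by simpa [s.2] using s.1.2.entry_le_card c

instance (n : ℕ) : Finite (StdTab n) := by
  refine Finite.of_injective (fun (s : StdTab n) (c : Fin n × Fin n) =>
    Fin.ofNat (n + 1) (s.1.2.entry (c.1, c.2))) fun s u h => ext_entry (funext fun c => ?_)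
  by_cases hc : c.1 < n ∧ c.2 < n
  · have := congrArg Fin.val (congrFun h (⟨c.1, hc.1⟩, ⟨c.2, hc.2⟩))
    simpa [Fin.val_ofNat, Nat.mod_eq_of_lt (Nat.lt_succ_of_le (s.entry_le c)),
      Nat.mod_eq_of_lt (Nat.lt_succ_of_le (u.entry_le c))] using this
  · have hnot (v : StdTab n) : c ∉ v.1.1 := fun hcv =>
      hc (v.2 ▸ YoungDiagram.lt_card_of_mem hcv)
    rw [s.1.2.zero_off c (hnot s), u.1.2.zero_off c (hnot u)]

noncomputable instance (n : ℕ) : Fintype (StdTab n) := Fintype.ofFinite _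

theorem contentT_bounds (s : StdTab n) (k : Fin n) :
    -(n : ℤ) < s.contentT (k + 1) ∧ s.contentT (k + 1) < n := by
  have hcell := (s.1.2.cellOf_spec (m := k + 1) (by omega) (by rw [s.2]; omega)).1
  have hlt := YoungDiagram.lt_card_of_mem hcell
  rw [s.2] at hlt
  simp only [contentT, StdTableau.contentAt]
  omega

theorem intCast_contentT (e : ℕ) (s : StdTab n) (k : Fin n) :
    ((s.contentT (k + 1) : ℤ) : ZMod e) = s.resSeqT e k := by
  simp [contentT, StdTableau.contentAt, resSeqT]

theorem mult_resSeqT (e : ℕ) (s : StdTab n) :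
    mult (s.resSeqT e) = s.1.1.cells.val.map fun c => (c.2 : ZMod e) - c.1 := by
  classical
  let cell : Fin n → ℕ × ℕ := fun k => s.1.2.cellOf (k + 1)
  have hspec (k : Fin n) : cell k ∈ s.1.1 ∧ s.1.2.entry (cell k) = k + 1 :=
    s.1.2.cellOf_spec (by omega) (by rw [s.2]; omega)
  have hinj : Function.Injective cell := fun a b hab =>
    Fin.ext (by have := (hspec a).2; rw [hab, (hspec b).2] at this; omega)
  have himage : Finset.univ.image cell = s.1.1.cells := by
    refine Finset.eq_of_subset_of_card_le (fun x hx => ?_) ?_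
    · obtain ⟨k, -, rfl⟩ := Finset.mem_image.mp hx
      exact (hspec k).1
    · rw [Finset.card_image_of_injective _ hinj, Finset.card_univ, Fintype.card_fin]
      exact s.2.le
  rw [← himage, Finset.image_val_of_injOn hinj.injOn, Multiset.map_map]
  rfl

end StdTab

theorem StdPair.gammaOf_resSeqT_left_eq_right (e : ℕ) {n : ℕ} (p : StdPair n) :
    gammaOf (p.left.resSeqT e) = gammaOf (p.right.resSeqT e) :=
  Quotient.sound (Or.inl (by rw [StdTab.mult_resSeqT, StdTab.mult_resSeqT]; rfl))

section Seminormal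

open Classical

variable {K : Type*} [Field K] {t : K} {e n : ℕ} {f : StdPair n → Hecke K t n}
  {γ : StdTab n → K}

theorem IsSNBasis.span_eq_top (hf : IsSNBasis K t n f γ) :
    Submodule.span K (Set.range f) = ⊤ :=
  top_le_iff.mp hf.span

/-- `Std(i)`, the standard tableaux with residue sequence `i`. -/
noncomputable def stdOfRes (e n : ℕ) (i : nseq e n) : Finset (StdTab n) :=
  {s | s.resSeqT e = i}

theorem mem_stdOfRes {i : nseq e n} {s : StdTab n} : s ∈ stdOfRes e n i ↔ s.resSeqT e = i := by
  simp [stdOfRes]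

theorem fres_eq_sum (i : nseq e n) :
    fres K t e n f γ i = ∑ s ∈ stdOfRes e n i, Fidem K t n f γ s :=
  finsum_cond_eq_sum_of_cond_iff _ fun _ => mem_stdOfRes.symm

variable (hf : IsSNBasis K t n f γ)
include hf

theorem Fidem_mul (s : StdTab n) (p : StdPair n) :
    Fidem K t n f γ s * f p = if p.left = s then f p else 0 := by
  rw [Fidem, smul_mul_assoc]
  split_ifs with hs
  · subst hs
    rw [hf.gammaMul p.left.diag p rfl]
    exact inv_smul_smul₀ (hf.gammaNe _) (f p)
  · rw [hf.gammaOrth s.diag p (Ne.symm hs), smul_zero]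

theorem mul_Fidem (s : StdTab n) (p : StdPair n) :
    f p * Fidem K t n f γ s = if p.right = s then f p else 0 := by
  rw [Fidem, mul_smul_comm]
  split_ifs with hs
  · subst hs
    rw [hf.gammaMul p p.right.diag rfl]
    exact inv_smul_smul₀ (hf.gammaNe _) (f p)
  · rw [hf.gammaOrth p s.diag hs, smul_zero]

theorem fres_mul (i : nseq e n) (p : StdPair n) :
    fres K t e n f γ i * f p = if p.left ∈ stdOfRes e n i then f p else 0 := by
  rw [fres_eq_sum, Finset.sum_mul, Finset.sum_congr rfl fun s _ => Fidem_mul hf s p,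
    Finset.sum_ite_eq]

theorem mul_fres (i : nseq e n) (p : StdPair n) :
    f p * fres K t e n f γ i = if p.right ∈ stdOfRes e n i then f p else 0 := by
  rw [fres_eq_sum, Finset.mul_sum, Finset.sum_congr rfl fun s _ => mul_Fidem hf s p,
    Finset.sum_ite_eq]

variable [NeZero e]

theorem fgam_mul (g : Qtilde e n) (p : StdPair n) :
    fgam K t e n f γ g * f p = if gammaOf (p.left.resSeqT e) = g then f p else 0 := by
  simp [fgam, Finset.sum_mul, fres_mul hf, mem_stdOfRes, Iγ]

theorem mul_fgam (g : Qtilde e n) (p : StdPair n) :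
    f p * fgam K t e n f γ g = if gammaOf (p.right.resSeqT e) = g then f p else 0 := by
  simp [fgam, Finset.mul_sum, mul_fres hf, mem_stdOfRes, Iγ]

end Seminormal

section Integrality

variable {K : Type*} [Field K] {t : K} {e n : ℕ} {O : Subring K}

theorem algebraMap_mem_HOsub {x : K} (hx : x ∈ O) :
    algebraMap K (Hecke K t n) x ∈ HOsub K t n O :=
  Subring.subset_closure (Or.inl ⟨x, hx, rfl⟩)

theorem Tword_mem_HOsub (w : List ℕ) : Tword K t n w ∈ HOsub K t n O := by
  refine list_prod_mem fun x hx => ?_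
  obtain ⟨m, -, rfl⟩ := List.mem_map.mp hx
  split
  · exact Subring.subset_closure (Or.inr ⟨_, rfl⟩)
  · exact one_mem _

theorem JM_mem_HOsub (hO : IsIdemSubring K O t e n) (k : ℕ) : JM K t n k ∈ HOsub K t n O :=
  sum_mem fun j _ => by
    rw [Algebra.smul_def]
    exact mul_mem (algebraMap_mem_HOsub (hO.zpow_mem _)) (Tword_mem_HOsub _)

/-- The pairs `(k, c)` with `c` a possible content of `k + 1` whose residue is not `i_k`. -/
noncomputable def offResidues (e n : ℕ) (i : nseq e n) : Finset (Fin n × ℤ) :=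
  {kc ∈ Finset.univ ×ˢ Finset.Ioo (-(n : ℤ)) n | (kc.2 : ZMod e) ≠ i kc.1}

noncomputable def interpolant (t : K) (i : nseq e n) : Hecke K t n :=
  ((offResidues e n i).toList.map fun kc =>
    JM K t n (kc.1 + 1) - algebraMap K (Hecke K t n) (qint t kc.2)).prod

noncomputable def interpolantEigenvalue (t : K) (i : nseq e n) (s : StdTab n) : K :=
  ∏ kc ∈ offResidues e n i, (qint t (s.contentT (kc.1 + 1)) - qint t kc.2)

theorem interpolant_mem_HOsub (hO : IsIdemSubring K O t e n) (i : nseq e n) :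
    interpolant t i ∈ HOsub K t n O := by
  refine list_prod_mem fun x hx => ?_
  obtain ⟨kc, -, rfl⟩ := List.mem_map.mp hx
  exact sub_mem (JM_mem_HOsub hO _) (algebraMap_mem_HOsub (hO.qint_mem _))

theorem interpolant_mul {f : StdPair n → Hecke K t n} {γ : StdTab n → K}
    (hf : IsSNBasis K t n f γ) (i : nseq e n) (p : StdPair n) :
    interpolant t i * f p = interpolantEigenvalue t i p.left • f p := by
  rw [interpolant, interpolantEigenvalue, ← Finset.prod_map_toList]
  refine list_prod_mul_eq_smul _ _ _ fun kc _ => ?_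
  rw [sub_mul, hf.eigL p _ (by omega) (by omega), ← Algebra.smul_def]
  exact (sub_smul (_ : K) _ (f p)).symm

theorem interpolantEigenvalue_eq_zero {i : nseq e n} {s : StdTab n} (hs : s.resSeqT e ≠ i) :
    interpolantEigenvalue t i s = 0 := by
  obtain ⟨k, hk⟩ := Function.ne_iff.mp hs
  refine Finset.prod_eq_zero (i := (k, s.contentT (k + 1))) ?_ (sub_self _)
  have hbounds := s.contentT_bounds k
  simpa [offResidues, StdTab.intCast_contentT, hbounds] using hk

theorem interpolantEigenvalue_mem_leftInv (ht : t ≠ 0) (hO : IsIdemSubring K O t e n)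
    {i : nseq e n} {s : StdTab n} (hs : s.resSeqT e = i) :
    interpolantEigenvalue t i s ∈ O.toSubmonoid.leftInv := by
  refine prod_mem fun kc hkc => hO.qint_sub_qint_mem_leftInv ht ?_
  rw [StdTab.intCast_contentT, hs]
  exact (Finset.mem_filter.mp hkc).2.symm

theorem fres_mem_HOsub (ht : t ≠ 0) (hO : IsIdemSubring K O t e n) {f : StdPair n → Hecke K t n}
    {γ : StdTab n → K} (hf : IsSNBasis K t n f γ) (i : nseq e n) :
    fres K t e n f γ i ∈ HOsub K t n O := by
  classical
  exact mem_of_mul_eq_ite_of_eigenvalue hf.span_eq_top (fun _ => algebraMap_mem_HOsub)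
    (interpolant_mem_HOsub hO i) (interpolant_mul hf i)
    (fun s hs => interpolantEigenvalue_eq_zero (mt mem_stdOfRes.mpr hs))
    (fun s hs => interpolantEigenvalue_mem_leftInv ht hO (mem_stdOfRes.mp hs)) (fres_mul hf i)

end Integrality

instance (e n : ℕ) [NeZero e] : Finite (Qtilde e n) := Quotient.finite _

theorem block_idempotent_decomposition_general
    (K : Type*) [Field K] (t : K) (ht : t ≠ 0) (e n : ℕ) [NeZero e]
    (O : Subring K) (hO : IsIdemSubring K O t e n)
    (f : StdPair n → Hecke K t n) (γ : StdTab n → K) (hf : IsSNBasis K t n f γ) :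
    (∀ g : Qtilde e n, fgam K t e n f γ g ∈ HOsub K t n O) ∧
    (∀ g : Qtilde e n, fgam K t e n f γ g * fgam K t e n f γ g = fgam K t e n f γ g) ∧
    (∀ g : Qtilde e n, ∀ h ∈ HOsub K t n O,
      fgam K t e n f γ g * h = h * fgam K t e n f γ g) ∧
    (∀ g g' : Qtilde e n, g ≠ g' → fgam K t e n f γ g * fgam K t e n f γ g' = 0) ∧
    (∑ᶠ g : Qtilde e n, fgam K t e n f γ g) = 1 := by
  classical
  have hspan := hf.span_eq_top
  have hleft := fgam_mul hf (e := e)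
  have hright : ∀ g p, f p * fgam K t e n f γ g =
      if gammaOf (p.left.resSeqT e) = g then f p else 0 := fun g p => by
    rw [mul_fgam hf, p.gammaOf_resSeqT_left_eq_right]
  exact ⟨fun g => sum_mem fun i _ => fres_mem_HOsub ht hO hf i,
    mul_self_of_mul_eq_ite hspan hleft,
    fun g h _ => (commute_of_mul_eq_ite hspan hleft hright g h).eq,
    fun g g' => mul_eq_zero_of_mul_eq_ite hspan hleft,
    finsum_eq_one_of_mul_eq_ite hspan hleft⟩

/-- For an `e`-idempotent subring `(O, t)`, each `f_γ^O = ∑_{i ∈ I^γ} f_i^O` is a central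
idempotent of `H^O`, the `f_γ^O` are pairwise orthogonal and sum to `1`; hence
`H^O = ⊕_{γ ∈ Q̃⁺_n} H^O_γ` with `H^O_γ = H^O f_γ^O`. -/
theorem block_idempotent_decomposition
    (K : Type*) [Field K] (t : K) (ht : t ≠ 0) (e n : ℕ) [NeZero e]
    (O : Subring K) (hO : IsIdemSubring K O t e n)
    (f : StdPair n → Hecke K t n) (γ : StdTab n → K) (hf : IsSNBasis K t n f γ)
    (st : Hecke K t n →ₗ[K] Hecke K t n) (hst : IsStarHecke K t n st)
    (hstar : IsStarBasis st f) :
    (∀ g : Qtilde e n, fgam K t e n f γ g ∈ HOsub K t n O) ∧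
    (∀ g : Qtilde e n, fgam K t e n f γ g * fgam K t e n f γ g = fgam K t e n f γ g) ∧
    (∀ g : Qtilde e n, ∀ h ∈ HOsub K t n O,
      fgam K t e n f γ g * h = h * fgam K t e n f γ g) ∧
    (∀ g g' : Qtilde e n, g ≠ g' → fgam K t e n f γ g * fgam K t e n f γ g' = 0) ∧
    (∑ᶠ g : Qtilde e n, fgam K t e n f γ g) = 1 :=
  block_idempotent_decomposition_general K t ht e n O hO f γ hf

end QH
end
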